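/- arXiv:2603.03886 — 2 statements merged into one kernel-verified Lean document; each statement's English description precedes it below -/
import Mathlib

section
/- Let μ ⊆ λ be Young diagrams and n ≥ 1. Then, as an identity of polynomials in the variables x₁,…,xₙ, ∑_{T ∈ X_μ^λ(n)} (−1)^{ℓ(T)} wt(T) = (−1)^{|λ|−|μ|} ∑_{U ∈ RSPP(λ/μ, n)} x^U, where X_μ^λ(n) (resp. RSPP(λ/μ, n)) consists of the elements of X_μ^λ (resp. RSPP(λ/μ)) all of whose entries are at most n. -/
/-- The cells of the skew shape `λ/μ`. -/
def skewCells (μ lam : YoungDiagram) : Finset (ℕ × ℕ) := lam.cells \ μ.cells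

/-- The total order on cells induced by a filling `f`: a cell `c = (i,j)` is smaller than
`c' = (i',j')` if `f c < f c'`, or `f c = f c'` and `j < j'`, or
`f c = f c'`, `j = j'` and `i > i'`. -/
def cellLT (f : ℕ × ℕ → ℕ) (c c' : ℕ × ℕ) : Prop :=
  f c < f c' ∨ (f c = f c' ∧ (c.2 < c'.2 ∨ (c.2 = c'.2 ∧ c'.1 < c.1)))

/-- `f` is a semistandard filling on the cell set `s`: entries are positive,
weakly increasing along rows (left to right) and strictly increasing down columns. -/
def IsSSYTOn (f : ℕ × ℕ → ℕ) (s : Finset (ℕ × ℕ)) : Prop :=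
  (∀ c ∈ s, 0 < f c) ∧
  (∀ i j j', j ≤ j' → (i, j) ∈ s → (i, j') ∈ s → f (i, j) ≤ f (i, j')) ∧
  (∀ i i' j, i < i' → (i, j) ∈ s → (i', j) ∈ s → f (i, j) < f (i', j))

/-- An element of `X_μ^λ`: a chain `μ = λ₀ ⊊ λ₁ ⊊ ⋯ ⊊ λ_k = λ` of Young diagrams together
with a filling of `λ/μ` whose restriction to each piece `λᵢ₊₁/λᵢ` is a semistandard Young
tableau.  (The tuple `(T⁽¹⁾, …, T⁽ᵏ⁾)` is recorded as the single concatenated filling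
`entry`, normalized to be `0` outside `λ/μ`; the chain is recorded as a function on `ℕ`
constantly equal to `λ` from index `k` on.) -/
structure XTuple (μ lam : YoungDiagram) where
  k : ℕ
  chain : ℕ → YoungDiagram
  chain_zero : chain 0 = μ
  chain_last : ∀ i, k ≤ i → chain i = lam
  chain_strict : ∀ i < k, (chain i).cells ⊂ (chain (i + 1)).cells
  entry : ℕ × ℕ → ℕ
  entry_eq_zero : ∀ c ∉ skewCells μ lam, entry c = 0
  piece_ssyt : ∀ i < k, IsSSYTOn entry ((chain (i + 1)).cells \ (chain i).cells)

/-- The cells of the `i`-th piece `T⁽ⁱ⁺¹⁾` (0-indexed: piece `i` has shape `λᵢ₊₁/λᵢ`). -/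
def pieceCells {μ lam : YoungDiagram} (T : XTuple μ lam) (i : ℕ) : Finset (ℕ × ℕ) :=
  (T.chain (i + 1)).cells \ (T.chain i).cells

/-- The length `ℓ(T) = k` of an element of `X_μ^λ`. -/
def XTuple.len {μ lam : YoungDiagram} (T : XTuple μ lam) : ℕ := T.k

/-- The cell `c`, lying in piece `i`, is splittable: its piece has more than one cell and
`c` is the largest cell of its piece. -/
def SplittableAt {μ lam : YoungDiagram} (T : XTuple μ lam) (c : ℕ × ℕ) (i : ℕ) : Prop :=
  i < T.k ∧ c ∈ pieceCells T i ∧ 1 < (pieceCells T i).card ∧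
    ∀ c' ∈ pieceCells T i, c' ≠ c → cellLT T.entry c' c

/-- The cell `c` is splittable in `T`. -/
def SplittableCell {μ lam : YoungDiagram} (T : XTuple μ lam) (c : ℕ × ℕ) : Prop :=
  ∃ i, SplittableAt T c i

/-- The cell `c`, lying in piece `i`, is mergeable: it is not in the first piece, its piece
is a single cell, the union of its piece with the previous piece is semistandard, and `c`
is larger than every cell of the previous piece. -/
def MergeableAt {μ lam : YoungDiagram} (T : XTuple μ lam) (c : ℕ × ℕ) (i : ℕ) : Prop :=
  1 ≤ i ∧ i < T.k ∧ c ∈ pieceCells T i ∧ (pieceCells T i).card = 1 ∧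
    IsSSYTOn T.entry (pieceCells T (i - 1) ∪ pieceCells T i) ∧
    ∀ c' ∈ pieceCells T (i - 1), cellLT T.entry c' c

/-- The cell `c` is mergeable in `T`. -/
def MergeableCell {μ lam : YoungDiagram} (T : XTuple μ lam) (c : ℕ × ℕ) : Prop :=
  ∃ i, MergeableAt T c i

/-- `cell(T)`: the largest cell of `T` (in the total order `cellLT T.entry`) among the
splittable or mergeable cells, or `none` (i.e. `∅`) if there is no such cell. -/
noncomputable def cellOf {μ lam : YoungDiagram} (T : XTuple μ lam) : Option (ℕ × ℕ) := by
  classical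
  exact if h : ∃ c, (SplittableCell T c ∨ MergeableCell T c) ∧
      ∀ c', (SplittableCell T c' ∨ MergeableCell T c') → c' ≠ c → cellLT T.entry c' c
    then some h.choose else none

/-- `T` is splittable if `cell(T)` is a splittable cell. -/
def XTuple.Splittable {μ lam : YoungDiagram} (T : XTuple μ lam) : Prop :=
  ∃ c, cellOf T = some c ∧ SplittableCell T c

/-- `T` is mergeable if `cell(T)` is a mergeable cell. -/
def XTuple.Mergeable {μ lam : YoungDiagram} (T : XTuple μ lam) : Prop :=
  ∃ c, cellOf T = some c ∧ MergeableCell T c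

/-- The graph of the map `Φ`:  if `cell(T)` is splittable and lies in piece `i`, the piece
is replaced by the pair `(T⁽ⁱ⁾ ∖ {cell(T)}, {cell(T)})`, i.e. the Young diagram
`λᵢ₊₁ ∖ {cell(T)}` is inserted into the chain; if `cell(T)` is mergeable and lies in piece
`i`, the pieces `i-1` and `i` are merged, i.e. `λᵢ` is deleted from the chain; if
`cell(T) = ∅` then `T` is fixed.  The filling is unchanged in all cases. -/
def PhiRel {μ lam : YoungDiagram} (T T' : XTuple μ lam) : Prop :=
  (∃ c i, cellOf T = some c ∧ SplittableAt T c i ∧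
      T'.k = T.k + 1 ∧ T'.entry = T.entry ∧
      (∀ j, j ≤ i → T'.chain j = T.chain j) ∧
      (T'.chain (i + 1)).cells = (T.chain (i + 1)).cells.erase c ∧
      (∀ j, i + 2 ≤ j → T'.chain j = T.chain (j - 1))) ∨
  (∃ c i, cellOf T = some c ∧ MergeableAt T c i ∧
      T'.k + 1 = T.k ∧ T'.entry = T.entry ∧
      (∀ j, j < i → T'.chain j = T.chain j) ∧
      (∀ j, i ≤ j → T'.chain j = T.chain (j + 1))) ∨
  (cellOf T = none ∧ T' = T)

/-- The map `Φ : X_μ^λ → X_μ^λ`. -/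
noncomputable def Phi {μ lam : YoungDiagram} (T : XTuple μ lam) : XTuple μ lam := by
  classical
  exact if h : ∃ T', PhiRel T T' then h.choose else T

open scoped BigOperators

/-- The weight `wt(T) = ∏ᵢ x^{T⁽ⁱ⁾} = ∏_{c ∈ λ/μ} x_{T(c)}`, as a polynomial in the
commuting variables `x₀, x₁, x₂, …` (only `x₁, x₂, …` occur, since entries are positive). -/
noncomputable def wt {μ lam : YoungDiagram} (T : XTuple μ lam) : MvPolynomial ℕ ℤ :=
  ∏ c ∈ skewCells μ lam, MvPolynomial.X (T.entry c)

/-- `f` is a row-strict plane partition on the cell set `s`: entries are positive,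
strictly decreasing along rows (left to right) and weakly decreasing down columns. -/
def IsRSPPOn (f : ℕ × ℕ → ℕ) (s : Finset (ℕ × ℕ)) : Prop :=
  (∀ c ∈ s, 0 < f c) ∧
  (∀ i j j', j < j' → (i, j) ∈ s → (i, j') ∈ s → f (i, j') < f (i, j)) ∧
  (∀ i i' j, i ≤ i' → (i, j) ∈ s → (i', j) ∈ s → f (i', j) ≤ f (i, j))

open scoped BigOperators

section CellOrder

variable (f : ℕ × ℕ → ℕ)

/-- Key for the total order `cellLT`. -/
def cellKey (c : ℕ × ℕ) : ℕ ×ₗ (ℕ ×ₗ ℕᵒᵈ) :=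
  toLex (f c, toLex (c.2, OrderDual.toDual c.1))

lemma cellKey_injective : Function.Injective (cellKey f) := by
  intro c c' h
  unfold cellKey at h
  have h1 := congrArg (fun x => (ofLex x).1) h
  have h2 := congrArg (fun x => (ofLex (ofLex x).2).1) h
  have h3 := congrArg (fun x => OrderDual.ofDual (ofLex (ofLex x).2).2) h
  simp at h1 h2 h3
  exact Prod.ext h3 h2

lemma cellLT_iff {c c' : ℕ × ℕ} : cellLT f c c' ↔ cellKey f c < cellKey f c' := by
  unfold cellLT cellKey
  rw [Prod.Lex.lt_iff]
  simp only [Prod.Lex.lt_iff]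
  constructor
  · rintro (h | ⟨he, h | ⟨he2, h⟩⟩)
    · exact Or.inl h
    · exact Or.inr ⟨he, Or.inl h⟩
    · exact Or.inr ⟨he, Or.inr ⟨he2, by exact h⟩⟩
  · rintro (h | ⟨he, h | ⟨he2, h⟩⟩)
    · exact Or.inl h
    · exact Or.inr ⟨he, Or.inl h⟩
    · exact Or.inr ⟨he, Or.inr ⟨he2, by exact h⟩⟩

lemma cellLT_trans {a b c : ℕ × ℕ} (h1 : cellLT f a b) (h2 : cellLT f b c) :
    cellLT f a c := by
  rw [cellLT_iff] at *; exact lt_trans h1 h2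

lemma cellLT_irrefl (a : ℕ × ℕ) : ¬ cellLT f a a := by
  rw [cellLT_iff]; exact lt_irrefl _

lemma cellLT_asymm {a b : ℕ × ℕ} (h : cellLT f a b) : ¬ cellLT f b a := by
  rw [cellLT_iff] at *; exact lt_asymm h

lemma cellLT_total {a b : ℕ × ℕ} (hne : a ≠ b) : cellLT f a b ∨ cellLT f b a := by
  rw [cellLT_iff, cellLT_iff]
  rcases lt_trichotomy (cellKey f a) (cellKey f b) with h | h | h
  · exact Or.inl h
  · exact absurd (cellKey_injective f h) hne
  · exact Or.inr h

/-- Existence of a maximum cell in a nonempty finite set. -/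
lemma exists_max_cell {s : Finset (ℕ × ℕ)} (hs : s.Nonempty) :
    ∃ c ∈ s, ∀ c' ∈ s, c' ≠ c → cellLT f c' c := by
  obtain ⟨b, hb, hmax⟩ := s.exists_max_image (cellKey f) hs
  refine ⟨b, hb, fun c' hc' hne => ?_⟩
  rw [cellLT_iff]
  exact lt_of_le_of_ne (hmax c' hc') (fun h => hne (cellKey_injective f h))

end CellOrder
section XTupleBasics

variable {μ lam : YoungDiagram}

lemma XTuple.ext' {T T' : XTuple μ lam} (hk : T.k = T'.k) (hc : T.chain = T'.chain)
    (he : T.entry = T'.entry) : T = T' := by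
  cases T; cases T'; simp_all

lemma chain_mono (T : XTuple μ lam) {i j : ℕ} (h : i ≤ j) :
    (T.chain i).cells ⊆ (T.chain j).cells := by
  induction j with
  | zero => simp_all
  | succ m ih =>
    rcases Nat.lt_or_ge m T.k with hm | hm
    · rcases Nat.eq_or_lt_of_le h with rfl | hlt
      · exact subset_rfl
      · exact (ih (Nat.lt_succ_iff.mp hlt)).trans (T.chain_strict m hm).subset
    · rw [T.chain_last (m+1) (hm.trans (Nat.le_succ m))]
      rcases Nat.lt_or_ge i T.k with hi | hi
      · have := ih (le_trans (Nat.le_of_lt hi) hm)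
        rwa [T.chain_last m hm] at this
      · rw [T.chain_last i hi]

lemma chain_le_lam (T : XTuple μ lam) (i : ℕ) : (T.chain i).cells ⊆ lam.cells := by
  have := chain_mono T (Nat.le_max_left i T.k)
  rwa [T.chain_last _ (Nat.le_max_right i T.k)] at this

lemma mu_le_chain (T : XTuple μ lam) (i : ℕ) : μ.cells ⊆ (T.chain i).cells := by
  have := chain_mono T (Nat.zero_le i)
  rwa [T.chain_zero] at this

lemma pieceCells_subset_skew (T : XTuple μ lam) (i : ℕ) :
    pieceCells T i ⊆ skewCells μ lam := by
  intro c hc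
  rw [pieceCells, Finset.mem_sdiff] at hc
  rw [skewCells, Finset.mem_sdiff]
  exact ⟨chain_le_lam T (i+1) hc.1, fun h => hc.2 (mu_le_chain T i h)⟩

lemma pieceCells_nonempty (T : XTuple μ lam) {i : ℕ} (hi : i < T.k) :
    (pieceCells T i).Nonempty := by
  rw [pieceCells]
  have := T.chain_strict i hi
  obtain ⟨c, hc1, hc2⟩ := Finset.exists_of_ssubset this
  exact ⟨c, Finset.mem_sdiff.mpr ⟨hc1, hc2⟩⟩

lemma pieceCells_disjoint (T : XTuple μ lam) {i j : ℕ} (hij : i < j) :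
    Disjoint (pieceCells T i) (pieceCells T j) := by
  rw [Finset.disjoint_left]
  intro c hc hc'
  rw [pieceCells, Finset.mem_sdiff] at hc hc'
  exact hc'.2 (chain_mono T hij hc.1)

lemma mem_pieceCells_unique (T : XTuple μ lam) {c : ℕ × ℕ} {i j : ℕ}
    (hi : c ∈ pieceCells T i) (hj : c ∈ pieceCells T j) : i = j := by
  by_contra hne
  rcases Nat.lt_or_ge i j with h | h
  · exact (Finset.disjoint_left.mp (pieceCells_disjoint T h) hi) hj
  · have h' : j < i := lt_of_le_of_ne h (Ne.symm hne)
    exact (Finset.disjoint_left.mp (pieceCells_disjoint T h') hj) hi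

lemma exists_piece_mem (T : XTuple μ lam) {c : ℕ × ℕ} (hc : c ∈ skewCells μ lam) :
    ∃ i < T.k, c ∈ pieceCells T i := by
  rw [skewCells, Finset.mem_sdiff] at hc
  have hex : ∃ j, c ∈ (T.chain j).cells := ⟨T.k, by rw [T.chain_last _ le_rfl]; exact hc.1⟩
  classical
  let m := Nat.find hex
  have hm : c ∈ (T.chain m).cells := Nat.find_spec hex
  have hm0 : m ≠ 0 := by
    intro h
    rw [h, T.chain_zero] at hm
    exact hc.2 hm
  obtain ⟨i, heq⟩ := Nat.exists_eq_succ_of_ne_zero hm0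
  have hnot : c ∉ (T.chain i).cells := by
    have := Nat.find_min hex (m := i) (by omega)
    exact this
  rw [heq] at hm
  refine ⟨i, ?_, Finset.mem_sdiff.mpr ⟨hm, hnot⟩⟩
  by_contra hik
  push_neg at hik
  rw [T.chain_last i hik] at hnot
  exact hnot hc.1

lemma entry_pos (T : XTuple μ lam) {c : ℕ × ℕ} (hc : c ∈ skewCells μ lam) :
    0 < T.entry c := by
  obtain ⟨i, hik, hci⟩ := exists_piece_mem T hc
  exact (T.piece_ssyt i hik).1 c hci

lemma card_chain_ge (T : XTuple μ lam) : ∀ i ≤ T.k, μ.cells.card + i ≤ ((T.chain i).cells).card := by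
  intro i
  induction i with
  | zero => intro _; rw [T.chain_zero]; simp
  | succ m ih =>
    intro h
    have hm : m < T.k := Nat.lt_of_succ_le h
    have h1 := ih (Nat.le_of_lt hm)
    have h2 := Finset.card_lt_card (T.chain_strict m hm)
    omega

lemma k_le_card_skew (T : XTuple μ lam) (hsub : μ ≤ lam) :
    T.k ≤ (skewCells μ lam).card := by
  have h1 := card_chain_ge T T.k le_rfl
  rw [T.chain_last _ le_rfl] at h1
  have h2 : (skewCells μ lam).card = lam.cells.card - μ.cells.card :=
    Finset.card_sdiff_of_subset (YoungDiagram.cells_subset_iff.mpr hsub)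
  omega

end XTupleBasics
section SSYTLemmas

lemma IsSSYTOn.mono {f : ℕ × ℕ → ℕ} {s t : Finset (ℕ × ℕ)} (hst : s ⊆ t)
    (h : IsSSYTOn f t) : IsSSYTOn f s :=
  ⟨fun c hc => h.1 c (hst hc),
   fun i j j' hj h1 h2 => h.2.1 i j j' hj (hst h1) (hst h2),
   fun i i' j hi h1 h2 => h.2.2 i i' j hi (hst h1) (hst h2)⟩

lemma isSSYTOn_singleton {f : ℕ × ℕ → ℕ} {c : ℕ × ℕ} (hc : 0 < f c) :
    IsSSYTOn f {c} := by
  refine ⟨fun d hd => by simp_all, ?_, ?_⟩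
  · intro i j j' hj h1 h2
    simp only [Finset.mem_singleton] at h1 h2
    rw [h1, ← h2]
  · intro i i' j hi h1 h2
    simp only [Finset.mem_singleton] at h1 h2
    have := h1.trans h2.symm
    simp only [Prod.mk.injEq] at this
    omega

/-- Extending an SSYT piece by a strictly larger cell outside an ambient Young diagram. -/
lemma IsSSYTOn.extend {f : ℕ × ℕ → ℕ} {Q : Finset (ℕ × ℕ)} (hQ : IsSSYTOn f Q)
    {D : YoungDiagram} (hQD : Q ⊆ D.cells) {d : ℕ × ℕ} (hd : d ∉ D.cells)
    (hfd : 0 < f d) (hmax : ∀ q ∈ Q, cellLT f q d) : IsSSYTOn f (Q ∪ {d}) := by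
  have hdQ : d ∉ Q := fun h => hd (hQD h)
  refine ⟨?_, ?_, ?_⟩
  · intro c hc
    rcases Finset.mem_union.mp hc with h | h
    · exact hQ.1 c h
    · simp only [Finset.mem_singleton] at h; rw [h]; exact hfd
  · intro i j j' hj h1 h2
    rcases Finset.mem_union.mp h1 with h1 | h1 <;> rcases Finset.mem_union.mp h2 with h2 | h2
    · exact hQ.2.1 i j j' hj h1 h2
    · -- (i,j) ∈ Q, (i,j') = d
      simp only [Finset.mem_singleton] at h2
      rw [h2]
      rcases hmax _ h1 with h | ⟨he, _⟩
      · exact le_of_lt h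
      · exact le_of_eq he
    · -- (i,j) = d, (i,j') ∈ Q
      simp only [Finset.mem_singleton] at h1
      rcases Nat.eq_or_lt_of_le hj with rfl | hjlt
      · exact le_rfl
      · exfalso
        apply hd
        rw [← h1]
        exact D.isLowerSet (by simp [Prod.le_def]; omega) (hQD h2)
    · simp only [Finset.mem_singleton] at h1 h2
      rw [h1.trans h2.symm]
  · intro i i' j hi h1 h2
    rcases Finset.mem_union.mp h1 with h1 | h1 <;> rcases Finset.mem_union.mp h2 with h2 | h2
    · exact hQ.2.2 i i' j hi h1 h2
    · -- (i,j) ∈ Q, (i',j) = d : need f (i,j) < f d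
      simp only [Finset.mem_singleton] at h2
      rw [h2]
      rcases hmax _ h1 with h | ⟨he, hcol⟩
      · exact h
      · exfalso
        rw [← h2] at hcol
        simp only [Prod.fst, Prod.snd] at hcol
        omega
    · -- (i,j) = d, (i',j) ∈ Q : impossible, d would be in D
      exfalso
      simp only [Finset.mem_singleton] at h1
      apply hd
      rw [← h1]
      exact D.isLowerSet (by simp [Prod.le_def]; omega) (hQD h2)
    · simp only [Finset.mem_singleton] at h1 h2
      exfalso
      have := h1.trans h2.symm
      simp only [Prod.mk.injEq] at this
      omega

end SSYTLemmas

section CellOfLemmas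

variable {μ lam : YoungDiagram}

/-- A cell is good if it is splittable or mergeable. -/
def GoodCell (T : XTuple μ lam) (c : ℕ × ℕ) : Prop :=
  SplittableCell T c ∨ MergeableCell T c

lemma GoodCell.mem_skew {T : XTuple μ lam} {c : ℕ × ℕ} (h : GoodCell T c) :
    c ∈ skewCells μ lam := by
  rcases h with ⟨i, hi⟩ | ⟨i, hi⟩
  · exact pieceCells_subset_skew T i hi.2.1
  · exact pieceCells_subset_skew T i hi.2.2.1

lemma cellOf_eq_some_of {T : XTuple μ lam} {c : ℕ × ℕ} (hc : GoodCell T c)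
    (hmax : ∀ c', GoodCell T c' → c' ≠ c → cellLT T.entry c' c) :
    cellOf T = some c := by
  rw [cellOf]
  have hex : ∃ c, (SplittableCell T c ∨ MergeableCell T c) ∧
      ∀ c', (SplittableCell T c' ∨ MergeableCell T c') → c' ≠ c → cellLT T.entry c' c :=
    ⟨c, hc, hmax⟩
  rw [dif_pos hex]
  congr 1
  by_contra hne
  have h1 := hex.choose_spec
  have h2 := hmax _ h1.1 (fun h => hne (h ▸ rfl))
  have h3 := h1.2 c hc (fun h => hne (by rw [h]))
  exact cellLT_asymm T.entry h2 h3

lemma cellOf_spec {T : XTuple μ lam} {c : ℕ × ℕ} (h : cellOf T = some c) :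
    GoodCell T c ∧ ∀ c', GoodCell T c' → c' ≠ c → cellLT T.entry c' c := by
  rw [cellOf] at h
  by_cases hex : ∃ c, (SplittableCell T c ∨ MergeableCell T c) ∧
      ∀ c', (SplittableCell T c' ∨ MergeableCell T c') → c' ≠ c → cellLT T.entry c' c
  · rw [dif_pos hex] at h
    have := hex.choose_spec
    rw [Option.some_inj] at h
    rw [← h]
    exact ⟨this.1, this.2⟩
  · rw [dif_neg hex] at h
    exact absurd h (by simp)

lemma cellOf_eq_none_iff {T : XTuple μ lam} :
    cellOf T = none ↔ ∀ c, ¬ GoodCell T c := by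
  constructor
  · intro h c hc
    classical
    -- there is a max good cell
    have hsub : {c' ∈ skewCells μ lam | GoodCell T c'}.Nonempty :=
      ⟨c, Finset.mem_filter.mpr ⟨hc.mem_skew, hc⟩⟩
    obtain ⟨b, hb, hbmax⟩ := exists_max_cell T.entry hsub
    have hbg : GoodCell T b := (Finset.mem_filter.mp hb).2
    have : cellOf T = some b := by
      apply cellOf_eq_some_of hbg
      intro c' hc' hne
      exact hbmax c' (Finset.mem_filter.mpr ⟨hc'.mem_skew, hc'⟩) hne
    rw [h] at this
    exact absurd this (by simp)
  · intro h
    rw [cellOf]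
    rw [dif_neg]
    rintro ⟨c, hc, -⟩
    exact h c hc

end CellOfLemmas
section Constructions

variable {μ lam : YoungDiagram}

lemma max_cell_corner {T : XTuple μ lam} {c : ℕ × ℕ} {i : ℕ} (hik : i < T.k)
    (hc : c ∈ pieceCells T i)
    (hmax : ∀ c' ∈ pieceCells T i, c' ≠ c → cellLT T.entry c' c) :
    (c.1, c.2 + 1) ∉ (T.chain (i+1)).cells ∧ (c.1 + 1, c.2) ∉ (T.chain (i+1)).cells := by
  obtain ⟨r, s⟩ := c
  have hssyt := T.piece_ssyt i hik
  have hpc := hc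
  rw [pieceCells, Finset.mem_sdiff] at hpc
  constructor
  · intro hmem
    simp only at hmem
    by_cases hA : (r, s+1) ∈ (T.chain i).cells
    · exact hpc.2 ((T.chain i).isLowerSet (a := ((r, s+1) : ℕ × ℕ))
        (by simp [Prod.le_def]) hA)
    · have hp : (r, s+1) ∈ pieceCells T i := Finset.mem_sdiff.mpr ⟨hmem, hA⟩
      have hle : T.entry (r, s) ≤ T.entry (r, s+1) :=
        hssyt.2.1 r s (s+1) (by omega) hc hp
      have hlt := hmax _ hp (by simp)
      rcases hlt with h | ⟨he, h | ⟨h, _⟩⟩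
      · omega
      · simp at h
      · simp at h
  · intro hmem
    simp only at hmem
    by_cases hA : (r+1, s) ∈ (T.chain i).cells
    · exact hpc.2 ((T.chain i).isLowerSet (a := ((r+1, s) : ℕ × ℕ))
        (by simp [Prod.le_def]) hA)
    · have hp : (r+1, s) ∈ pieceCells T i := Finset.mem_sdiff.mpr ⟨hmem, hA⟩
      have hlt2 : T.entry (r, s) < T.entry (r+1, s) :=
        hssyt.2.2 r (r+1) s (by omega) hc hp
      have hlt := hmax _ hp (by simp)
      rcases hlt with h | ⟨he, h | ⟨_, h⟩⟩
      · omega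
      · simp at h
      · simp at h; omega

lemma erase_isLowerSet {T : XTuple μ lam} {c : ℕ × ℕ} {i : ℕ} (hik : i < T.k)
    (hc : c ∈ pieceCells T i)
    (hmax : ∀ c' ∈ pieceCells T i, c' ≠ c → cellLT T.entry c' c) :
    IsLowerSet (((T.chain (i+1)).cells.erase c : Finset (ℕ × ℕ)) : Set (ℕ × ℕ)) := by
  obtain ⟨hr, hb⟩ := max_cell_corner hik hc hmax
  intro x y hyx hx
  simp only [Finset.coe_erase, Set.mem_diff, Finset.mem_coe, Set.mem_singleton_iff] at hx ⊢
  refine ⟨(T.chain (i+1)).isLowerSet hyx hx.1, ?_⟩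
  intro hyeq
  have hxc : c ≤ x := hyeq ▸ hyx
  have hne : x ≠ c := hx.2
  rcases Prod.le_def.mp hxc with ⟨h1, h2⟩
  rcases Nat.lt_or_ge c.1 x.1 with h | h
  · exact hb ((T.chain (i+1)).isLowerSet (a := x) (Prod.le_def.mpr ⟨by omega, by omega⟩) hx.1)
  · have hx1 : x.1 = c.1 := by omega
    have hx2 : c.2 < x.2 := by
      rcases Nat.lt_or_ge c.2 x.2 with h' | h'
      · exact h'
      · exfalso; exact hne (Prod.ext (by omega) (by omega))
    exact hr ((T.chain (i+1)).isLowerSet (a := x) (Prod.le_def.mpr ⟨by omega, by omega⟩) hx.1)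

/-- The chain of the split of `T` at a splittable cell `c` in piece `i`. -/
def splitChain (T : XTuple μ lam) (c : ℕ × ℕ) (i : ℕ) (h : SplittableAt T c i) :
    ℕ → YoungDiagram := fun j =>
  if j ≤ i then T.chain j
  else if j = i + 1 then ⟨(T.chain (i+1)).cells.erase c, erase_isLowerSet h.1 h.2.1 h.2.2.2⟩
  else T.chain (j - 1)

lemma splitChain_le {T : XTuple μ lam} {c : ℕ × ℕ} {i : ℕ} (h : SplittableAt T c i)
    {j : ℕ} (hj : j ≤ i) : splitChain T c i h j = T.chain j := if_pos hj

lemma splitChain_mid_cells {T : XTuple μ lam} {c : ℕ × ℕ} {i : ℕ} (h : SplittableAt T c i) :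
    (splitChain T c i h (i+1)).cells = (T.chain (i+1)).cells.erase c := by
  rw [splitChain]
  rw [if_neg (by omega : ¬ (i + 1 ≤ i)), if_pos (rfl : i + 1 = i + 1)]

lemma splitChain_ge {T : XTuple μ lam} {c : ℕ × ℕ} {i : ℕ} (h : SplittableAt T c i)
    {j : ℕ} (hj : i + 2 ≤ j) : splitChain T c i h j = T.chain (j - 1) := by
  rw [splitChain]
  rw [if_neg (by omega : ¬ (j ≤ i)), if_neg (by omega : ¬ (j = i + 1))]

lemma mem_piece_not_chain {T : XTuple μ lam} {c : ℕ × ℕ} {i : ℕ} (hc : c ∈ pieceCells T i) :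
    c ∈ (T.chain (i+1)).cells ∧ c ∉ (T.chain i).cells := by
  rw [pieceCells, Finset.mem_sdiff] at hc; exact hc

/-- The split of `T` at a splittable cell `c` in piece `i`. -/
def splitX (T : XTuple μ lam) (c : ℕ × ℕ) (i : ℕ) (h : SplittableAt T c i) :
    XTuple μ lam where
  k := T.k + 1
  chain := splitChain T c i h
  chain_zero := by rw [splitChain_le h (Nat.zero_le i), T.chain_zero]
  chain_last := by
    intro j hj
    have hik := h.1
    rw [splitChain_ge h (by omega)]
    exact T.chain_last (j-1) (by omega)
  chain_strict := by
    intro j hj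
    have hik := h.1
    rcases Nat.lt_or_ge j i with hji | hji
    · rw [splitChain_le h (by omega), splitChain_le h (by omega)]
      exact T.chain_strict j (by omega)
    rcases Nat.eq_or_lt_of_le hji with rfl | hji'
    · -- j = i
      rw [splitChain_le h le_rfl, splitChain_mid_cells h]
      constructor
      · intro q hq
        rw [Finset.mem_erase]
        refine ⟨?_, chain_mono T (by omega) hq⟩
        intro hqc
        rw [hqc] at hq
        exact (mem_piece_not_chain h.2.1).2 hq
      · intro hcon
        obtain ⟨a, ha, b, hb, hab⟩ := Finset.one_lt_card.mp h.2.2.1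
        have key : ∀ q ∈ pieceCells T i, q ≠ c → False := by
          intro q hq hqc
          have hq2 : q ∈ (T.chain (i+1)).cells.erase c :=
            Finset.mem_erase.mpr ⟨hqc, (mem_piece_not_chain hq).1⟩
          exact (mem_piece_not_chain hq).2 (hcon hq2)
        by_cases hac : a = c
        · exact key b hb (fun hh => hab (hac.trans hh.symm))
        · exact key a ha hac
    rcases Nat.eq_or_lt_of_le (Nat.succ_le_of_lt hji') with hj1 | hj1
    · -- j = i + 1
      have hj2 : j = i + 1 := hj1.symm
      subst hj2
      rw [splitChain_mid_cells h, splitChain_ge h (by omega : i + 2 ≤ i + 1 + 1)]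
      have e5 : i + 1 + 1 - 1 = i + 1 := by omega
      rw [e5]
      rw [Finset.ssubset_iff_of_subset (Finset.erase_subset _ _)]
      exact ⟨c, (mem_piece_not_chain h.2.1).1, Finset.notMem_erase c _⟩
    · -- j ≥ i + 2
      rw [splitChain_ge h (by omega), splitChain_ge h (by omega)]
      have e5 : j + 1 - 1 = j - 1 + 1 := by omega
      rw [e5]
      exact T.chain_strict (j-1) (by omega)
  entry := T.entry
  entry_eq_zero := T.entry_eq_zero
  piece_ssyt := by
    intro j hj
    have hik := h.1
    rcases Nat.lt_or_ge j i with hji | hji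
    · rw [splitChain_le h (by omega), splitChain_le h (by omega)]
      exact T.piece_ssyt j (by omega)
    rcases Nat.eq_or_lt_of_le hji with rfl | hji'
    · rw [splitChain_le h le_rfl, splitChain_mid_cells h]
      refine IsSSYTOn.mono ?_ (T.piece_ssyt i (by omega))
      intro q hq
      rw [Finset.mem_sdiff, Finset.mem_erase] at hq
      rw [Finset.mem_sdiff]
      exact ⟨hq.1.2, hq.2⟩
    rcases Nat.eq_or_lt_of_le (Nat.succ_le_of_lt hji') with hj1 | hj1
    · -- j = i+1
      have hj2 : j = i + 1 := hj1.symm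
      subst hj2
      rw [splitChain_mid_cells h, splitChain_ge h (by omega : i + 2 ≤ i + 1 + 1)]
      have e5 : i + 1 + 1 - 1 = i + 1 := by omega
      rw [e5]
      have hset : (T.chain (i+1)).cells \ (T.chain (i+1)).cells.erase c = {c} := by
        ext q
        rw [Finset.mem_sdiff, Finset.mem_erase, Finset.mem_singleton]
        constructor
        · rintro ⟨hq1, hq2⟩
          by_contra hq3
          exact hq2 ⟨hq3, hq1⟩
        · rintro rfl
          exact ⟨(mem_piece_not_chain h.2.1).1, fun hh => hh.1 rfl⟩
      rw [hset]
      exact isSSYTOn_singleton (entry_pos T (pieceCells_subset_skew T i h.2.1))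
    · rw [splitChain_ge h (by omega), splitChain_ge h (by omega)]
      have e5 : j + 1 - 1 = j - 1 + 1 := by omega
      rw [e5]
      exact T.piece_ssyt (j-1) (by omega)

end Constructions
section Constructions2

variable {μ lam : YoungDiagram}

@[simp] lemma splitX_k {T : XTuple μ lam} {c : ℕ × ℕ} {i : ℕ} (h : SplittableAt T c i) :
    (splitX T c i h).k = T.k + 1 := rfl

@[simp] lemma splitX_entry {T : XTuple μ lam} {c : ℕ × ℕ} {i : ℕ} (h : SplittableAt T c i) :
    (splitX T c i h).entry = T.entry := rfl

lemma splitX_chain {T : XTuple μ lam} {c : ℕ × ℕ} {i : ℕ} (h : SplittableAt T c i) :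
    (splitX T c i h).chain = splitChain T c i h := rfl

lemma pieceCells_splitX_lt {T : XTuple μ lam} {c : ℕ × ℕ} {i : ℕ} (h : SplittableAt T c i)
    {j : ℕ} (hj : j < i) : pieceCells (splitX T c i h) j = pieceCells T j := by
  rw [pieceCells, pieceCells, splitX_chain, splitChain_le h (by omega),
    splitChain_le h (by omega)]

lemma pieceCells_splitX_i {T : XTuple μ lam} {c : ℕ × ℕ} {i : ℕ} (h : SplittableAt T c i) :
    pieceCells (splitX T c i h) i = (pieceCells T i).erase c := by
  rw [pieceCells, pieceCells, splitX_chain, splitChain_le h le_rfl]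
  ext q
  rw [Finset.mem_sdiff, splitChain_mid_cells h, Finset.mem_erase, Finset.mem_erase,
    Finset.mem_sdiff]
  tauto

lemma pieceCells_splitX_succ {T : XTuple μ lam} {c : ℕ × ℕ} {i : ℕ} (h : SplittableAt T c i) :
    pieceCells (splitX T c i h) (i+1) = {c} := by
  rw [pieceCells, splitX_chain, splitChain_ge h (by omega : i + 2 ≤ i + 1 + 1),
    splitChain_mid_cells h]
  have e5 : i + 1 + 1 - 1 = i + 1 := by omega
  rw [e5]
  ext q
  rw [Finset.mem_sdiff, Finset.mem_erase, Finset.mem_singleton]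
  constructor
  · rintro ⟨hq1, hq2⟩
    by_contra hq3
    exact hq2 ⟨hq3, hq1⟩
  · rintro rfl
    exact ⟨(mem_piece_not_chain h.2.1).1, fun hh => hh.1 rfl⟩

lemma pieceCells_splitX_ge {T : XTuple μ lam} {c : ℕ × ℕ} {i : ℕ} (h : SplittableAt T c i)
    {j : ℕ} (hj : i + 2 ≤ j) : pieceCells (splitX T c i h) j = pieceCells T (j-1) := by
  rw [pieceCells, pieceCells, splitX_chain, splitChain_ge h (by omega : i + 2 ≤ j + 1),
    splitChain_ge h hj]
  have e5 : j + 1 - 1 = j - 1 + 1 := by omega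
  rw [e5]

/-- The chain of the merge. -/
def mergeChain (T : XTuple μ lam) (i : ℕ) : ℕ → YoungDiagram := fun j =>
  if j < i then T.chain j else T.chain (j + 1)

lemma mergeChain_lt {T : XTuple μ lam} {i j : ℕ} (hj : j < i) :
    mergeChain T i j = T.chain j := if_pos hj

lemma mergeChain_ge {T : XTuple μ lam} {i j : ℕ} (hj : i ≤ j) :
    mergeChain T i j = T.chain (j + 1) := if_neg (by omega)

/-- The merge of `T` at a mergeable cell `c` in piece `i`. -/
def mergeX (T : XTuple μ lam) (c : ℕ × ℕ) (i : ℕ) (h : MergeableAt T c i) :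
    XTuple μ lam where
  k := T.k - 1
  chain := mergeChain T i
  chain_zero := by rw [mergeChain_lt h.1, T.chain_zero]
  chain_last := by
    intro j hj
    have h1 := h.1
    have h2 := h.2.1
    rw [mergeChain_ge (by omega)]
    exact T.chain_last (j+1) (by omega)
  chain_strict := by
    intro j hj
    have h1 := h.1
    have h2 := h.2.1
    rcases Nat.lt_or_ge (j+1) i with hji | hji
    · rw [mergeChain_lt hji, mergeChain_lt (show j < i by omega)]
      exact T.chain_strict j (by omega)
    rcases Nat.eq_or_lt_of_le hji with hj1 | hj1
    · -- j + 1 = i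
      rw [mergeChain_ge (show i ≤ j + 1 by omega), mergeChain_lt (show j < i by omega)]
      exact ssubset_of_ssubset_of_subset (T.chain_strict j (by omega))
        (chain_mono T (by omega))
    · rw [mergeChain_ge (show i ≤ j + 1 by omega), mergeChain_ge (show i ≤ j by omega)]
      exact T.chain_strict (j+1) (by omega)
  entry := T.entry
  entry_eq_zero := T.entry_eq_zero
  piece_ssyt := by
    intro j hj
    have h1 := h.1
    have h2 := h.2.1
    rcases Nat.lt_or_ge (j+1) i with hji | hji
    · rw [mergeChain_lt hji, mergeChain_lt (show j < i by omega)]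
      exact T.piece_ssyt j (by omega)
    rcases Nat.eq_or_lt_of_le hji with hj1 | hj1
    · -- j + 1 = i, i.e. j = i - 1
      rw [mergeChain_ge (show i ≤ j + 1 by omega), mergeChain_lt (show j < i by omega)]
      have hji0 : j = i - 1 := by omega
      subst hji0
      have hji2 : i - 1 + 1 = i := by omega
      have hju : pieceCells T (i-1) ∪ pieceCells T i
          = (T.chain (i - 1 + 1 + 1)).cells \ (T.chain (i-1)).cells := by
        rw [hji2]
        simp only [pieceCells, hji2]
        ext q
        rw [Finset.mem_union, Finset.mem_sdiff, Finset.mem_sdiff, Finset.mem_sdiff]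
        constructor
        · rintro (⟨hq1, hq2⟩ | ⟨hq1, hq2⟩)
          · exact ⟨chain_mono T (by omega) hq1, hq2⟩
          · exact ⟨hq1, fun hh => hq2 (chain_mono T (by omega) hh)⟩
        · rintro ⟨hq1, hq2⟩
          by_cases hqi : q ∈ (T.chain i).cells
          · exact Or.inl ⟨hqi, hq2⟩
          · exact Or.inr ⟨hq1, hqi⟩
      rw [← hju]
      exact h.2.2.2.2.1
    · rw [mergeChain_ge (show i ≤ j + 1 by omega), mergeChain_ge (show i ≤ j by omega)]
      exact T.piece_ssyt (j+1) (by omega)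

@[simp] lemma mergeX_k {T : XTuple μ lam} {c : ℕ × ℕ} {i : ℕ} (h : MergeableAt T c i) :
    (mergeX T c i h).k = T.k - 1 := rfl

@[simp] lemma mergeX_entry {T : XTuple μ lam} {c : ℕ × ℕ} {i : ℕ} (h : MergeableAt T c i) :
    (mergeX T c i h).entry = T.entry := rfl

lemma mergeX_chain {T : XTuple μ lam} {c : ℕ × ℕ} {i : ℕ} (h : MergeableAt T c i) :
    (mergeX T c i h).chain = mergeChain T i := rfl

lemma pieceCells_mergeX_lt {T : XTuple μ lam} {c : ℕ × ℕ} {i : ℕ} (h : MergeableAt T c i)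
    {j : ℕ} (hj : j + 1 < i) : pieceCells (mergeX T c i h) j = pieceCells T j := by
  rw [pieceCells, pieceCells, mergeX_chain, mergeChain_lt hj,
    mergeChain_lt (show j < i by omega)]

lemma pieceCells_mergeX_merged {T : XTuple μ lam} {c : ℕ × ℕ} {i : ℕ} (h : MergeableAt T c i) :
    pieceCells (mergeX T c i h) (i-1) = pieceCells T (i-1) ∪ pieceCells T i := by
  have h1 := h.1
  rw [pieceCells, mergeX_chain, mergeChain_ge (show i ≤ i - 1 + 1 by omega),
    mergeChain_lt (show i - 1 < i by omega)]
  have hji2 : i - 1 + 1 = i := by omega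
  rw [hji2]
  simp only [pieceCells, hji2]
  ext q
  rw [Finset.mem_union, Finset.mem_sdiff, Finset.mem_sdiff, Finset.mem_sdiff]
  constructor
  · rintro ⟨hq1, hq2⟩
    by_cases hqi : q ∈ (T.chain i).cells
    · exact Or.inl ⟨hqi, hq2⟩
    · exact Or.inr ⟨hq1, hqi⟩
  · rintro (⟨hq1, hq2⟩ | ⟨hq1, hq2⟩)
    · exact ⟨chain_mono T (by omega) hq1, hq2⟩
    · exact ⟨hq1, fun hh => hq2 (chain_mono T (by omega) hh)⟩

lemma pieceCells_mergeX_ge {T : XTuple μ lam} {c : ℕ × ℕ} {i : ℕ} (h : MergeableAt T c i)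
    {j : ℕ} (hj : i ≤ j) : pieceCells (mergeX T c i h) j = pieceCells T (j+1) := by
  rw [pieceCells, pieceCells, mergeX_chain, mergeChain_ge (show i ≤ j + 1 by omega),
    mergeChain_ge hj]

/-- The SSYT condition in `MergeableAt` is automatic. -/
lemma mergeableAt_of {T : XTuple μ lam} {c : ℕ × ℕ} {i : ℕ} (h1 : 1 ≤ i) (h2 : i < T.k)
    (hc : pieceCells T i = {c})
    (hgt : ∀ q ∈ pieceCells T (i-1), cellLT T.entry q c) : MergeableAt T c i := by
  have hcmem : c ∈ pieceCells T i := by rw [hc]; exact Finset.mem_singleton_self c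
  refine ⟨h1, h2, hcmem, by rw [hc]; simp, ?_, hgt⟩
  rw [hc]
  exact IsSSYTOn.extend (T.piece_ssyt (i-1) (by omega))
    (D := T.chain i)
    (by intro q hq
        simp only [pieceCells, Finset.mem_sdiff] at hq
        have e : i - 1 + 1 = i := by omega
        rw [e] at hq; exact hq.1)
    ((mem_piece_not_chain hcmem).2)
    (entry_pos T (pieceCells_subset_skew T i hcmem))
    hgt

end Constructions2
section Involution

variable {μ lam : YoungDiagram}

lemma splittableAt_unique {T : XTuple μ lam} {c : ℕ × ℕ} {i j : ℕ}
    (hi : SplittableAt T c i) (hj : SplittableAt T c j) : i = j :=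
  mem_pieceCells_unique T hi.2.1 hj.2.1

lemma mergeableAt_unique {T : XTuple μ lam} {c : ℕ × ℕ} {i j : ℕ}
    (hi : MergeableAt T c i) (hj : MergeableAt T c j) : i = j :=
  mem_pieceCells_unique T hi.2.2.1 hj.2.2.1

lemma not_split_and_merge {T : XTuple μ lam} {c : ℕ × ℕ} {i j : ℕ}
    (hi : SplittableAt T c i) (hj : MergeableAt T c j) : False := by
  have := mem_pieceCells_unique T hi.2.1 hj.2.2.1
  subst this
  have h1 := hi.2.2.1
  have h2 := hj.2.2.2.1
  omega

lemma splittableAt_congr {T T' : XTuple μ lam} (he : T'.entry = T.entry) {j j' : ℕ}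
    (hp : pieceCells T' j = pieceCells T j') (hj : j' < T.k) {c' : ℕ × ℕ}
    (h : SplittableAt T' c' j) : SplittableAt T c' j' := by
  obtain ⟨-, h2, h3, h4⟩ := h
  rw [hp] at h2 h3
  refine ⟨hj, h2, h3, ?_⟩
  intro q hq hqne
  have := h4 q (by rw [hp]; exact hq) hqne
  rwa [he] at this

lemma mergeableAt_congr {T T' : XTuple μ lam} (he : T'.entry = T.entry) {j j' : ℕ}
    (hj'0 : 1 ≤ j') (hj' : j' < T.k)
    (hp : pieceCells T' j = pieceCells T j') (hq : pieceCells T' (j-1) = pieceCells T (j'-1))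
    {c' : ℕ × ℕ} (h : MergeableAt T' c' j) : MergeableAt T c' j' := by
  obtain ⟨-, -, h3, h4, h5, h6⟩ := h
  rw [hp] at h3 h4
  rw [he, hp, hq] at h5
  refine ⟨hj'0, hj', h3, h4, h5, ?_⟩
  intro q hqm
  have := h6 q (by rw [hq]; exact hqm)
  rwa [he] at this

/-- After splitting at the maximal cell, that cell is still the maximal good cell. -/
lemma cellOf_splitX {T : XTuple μ lam} {c : ℕ × ℕ} {i : ℕ}
    (hmax : ∀ c', GoodCell T c' → c' ≠ c → cellLT T.entry c' c)
    (hs : SplittableAt T c i) :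
    cellOf (splitX T c i hs) = some c ∧ MergeableAt (splitX T c i hs) c (i+1) := by
  set T' := splitX T c i hs with hT'
  have hik := hs.1
  have he : T'.entry = T.entry := rfl
  have hm : MergeableAt T' c (i+1) := by
    apply mergeableAt_of (by omega) (by rw [hT', splitX_k]; omega)
    · exact pieceCells_splitX_succ hs
    · intro q hq
      have e : i + 1 - 1 = i := by omega
      rw [e, pieceCells_splitX_i hs, Finset.mem_erase] at hq
      rw [he]
      exact hs.2.2.2 q hq.2 hq.1
  refine ⟨?_, hm⟩
  apply cellOf_eq_some_of (Or.inr ⟨i+1, hm⟩)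
  intro c' hgood hne
  rw [he]
  have hk' : T'.k = T.k + 1 := rfl
  rcases hgood with ⟨j, hsj⟩ | ⟨j, hmj⟩
  · -- splittable in T' at j
    rcases Nat.lt_or_ge j i with hj | hj
    · have : SplittableAt T c' j :=
        splittableAt_congr he (pieceCells_splitX_lt hs hj) (by omega) hsj
      exact hmax c' (Or.inl ⟨j, this⟩) hne
    rcases Nat.eq_or_lt_of_le hj with rfl | hj'
    · -- j = i : c' in the erased piece
      have hc' := hsj.2.1
      rw [pieceCells_splitX_i hs, Finset.mem_erase] at hc'
      exact hs.2.2.2 c' hc'.2 hc'.1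
    rcases Nat.eq_or_lt_of_le (Nat.succ_le_of_lt hj') with hj1 | hj1
    · -- j = i + 1 : piece is {c}, so c' = c
      exfalso
      have hc' := hsj.2.1
      rw [← hj1] at hc'
      rw [pieceCells_splitX_succ hs, Finset.mem_singleton] at hc'
      exact hne hc'
    · -- j ≥ i + 2
      have hjk : j < T.k + 1 := by rw [← hk']; exact hsj.1
      have : SplittableAt T c' (j-1) :=
        splittableAt_congr he (pieceCells_splitX_ge hs (by omega)) (by omega) hsj
      exact hmax c' (Or.inl ⟨j-1, this⟩) hne
  · -- mergeable in T' at j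
    have hj1 := hmj.1
    have hjk : j < T.k + 1 := by rw [← hk']; exact hmj.2.1
    rcases Nat.lt_or_ge j i with hj | hj
    · have : MergeableAt T c' j :=
        mergeableAt_congr he hj1 (by omega) (pieceCells_splitX_lt hs hj)
          (pieceCells_splitX_lt hs (by omega)) hmj
      exact hmax c' (Or.inr ⟨j, this⟩) hne
    rcases Nat.eq_or_lt_of_le hj with rfl | hj'
    · -- j = i : c' in erased piece
      have hc' := hmj.2.2.1
      rw [pieceCells_splitX_i hs, Finset.mem_erase] at hc'
      exact hs.2.2.2 c' hc'.2 hc'.1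
    rcases Nat.eq_or_lt_of_le (Nat.succ_le_of_lt hj') with hj2 | hj2
    · -- j = i + 1 : piece is {c}
      exfalso
      have hc' := hmj.2.2.1
      rw [← hj2] at hc'
      rw [pieceCells_splitX_succ hs, Finset.mem_singleton] at hc'
      exact hne hc'
    rcases Nat.eq_or_lt_of_le (Nat.succ_le_of_lt hj2) with hj3 | hj3
    · -- j = i + 2 : new mergeable cell above c
      have hj4 : j = i + 2 := hj3.symm
      subst hj4
      -- piece of c' in T' is pieceCells T (i+1), previous piece is {c}
      have hpc : pieceCells T' (i+2) = pieceCells T (i+1) := by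
        have := pieceCells_splitX_ge hs (le_refl (i+2))
        simpa using this
      have hcc' : cellLT T.entry c c' := by
        have := hmj.2.2.2.2.2 c (by
          have e : i + 2 - 1 = i + 1 := by omega
          rw [e, pieceCells_splitX_succ hs]; exact Finset.mem_singleton_self c)
        rwa [he] at this
      have hMT : MergeableAt T c' (i+1) := by
        apply mergeableAt_of (by omega) (by omega)
        · -- pieceCells T (i+1) = {c'}
          have h4 := hmj.2.2.2.1
          have h3 := hmj.2.2.1
          rw [hpc] at h4 h3
          obtain ⟨a, ha⟩ := Finset.card_eq_one.mp h4
          rw [ha] at h3 ⊢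
          rw [Finset.mem_singleton] at h3
          rw [h3]
        · intro q hq
          have e : i + 1 - 1 = i := by omega
          rw [e] at hq
          by_cases hqc : q = c
          · rw [hqc]; exact hcc'
          · exact cellLT_trans T.entry (hs.2.2.2 q hq hqc) hcc'
      exact hmax c' (Or.inr ⟨i+1, hMT⟩) hne
    · -- j ≥ i + 3
      have : MergeableAt T c' (j-1) :=
        mergeableAt_congr he (by omega) (by omega)
          (pieceCells_splitX_ge hs (by omega))
          (pieceCells_splitX_ge hs (by omega)) hmj
      exact hmax c' (Or.inr ⟨j-1, this⟩) hne

end Involution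
section Involution2

variable {μ lam : YoungDiagram}

lemma piece_eq_singleton {T : XTuple μ lam} {c : ℕ × ℕ} {i : ℕ}
    (hc : c ∈ pieceCells T i) (h1 : (pieceCells T i).card = 1) :
    pieceCells T i = {c} := by
  obtain ⟨a, ha⟩ := Finset.card_eq_one.mp h1
  rw [ha] at hc ⊢
  rw [Finset.mem_singleton] at hc
  rw [hc]

/-- After merging at the maximal cell, that cell is still the maximal good cell. -/
lemma cellOf_mergeX {T : XTuple μ lam} {c : ℕ × ℕ} {i : ℕ}
    (hmax : ∀ c', GoodCell T c' → c' ≠ c → cellLT T.entry c' c)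
    (hm : MergeableAt T c i) :
    cellOf (mergeX T c i hm) = some c ∧ SplittableAt (mergeX T c i hm) c (i-1) := by
  set T' := mergeX T c i hm with hT'
  obtain ⟨hi1, hik, hcm, hcard, hun, hgt⟩ := hm
  have he : T'.entry = T.entry := rfl
  have hk' : T'.k = T.k - 1 := rfl
  have hPi : pieceCells T i = {c} := piece_eq_singleton hcm hcard
  have hmerged : pieceCells T' (i-1) = pieceCells T (i-1) ∪ pieceCells T i :=
    pieceCells_mergeX_merged _
  have hs : SplittableAt T' c (i-1) := by
    refine ⟨by omega, ?_, ?_, ?_⟩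
    · rw [hmerged, Finset.mem_union]; exact Or.inr hcm
    · rw [hmerged]
      obtain ⟨a, ha⟩ := pieceCells_nonempty T (show i - 1 < T.k by omega)
      have hac : a ≠ c := by
        intro hh
        rw [hh] at ha
        have := mem_pieceCells_unique T ha hcm
        omega
      exact Finset.one_lt_card.mpr ⟨a, Finset.mem_union_left _ ha, c,
        Finset.mem_union_right _ hcm, hac⟩
    · intro q hq hqc
      rw [hmerged, Finset.mem_union] at hq
      rcases hq with hq | hq
      · exact hgt q hq
      · rw [hPi, Finset.mem_singleton] at hq
        exact absurd hq hqc
  refine ⟨?_, hs⟩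
  apply cellOf_eq_some_of (Or.inl ⟨i-1, hs⟩)
  intro c' hgood hne
  rw [he]
  rcases hgood with ⟨j, hsj⟩ | ⟨j, hmj⟩
  · -- splittable in T' at j
    have hjk : j < T.k - 1 := by rw [← hk']; exact hsj.1
    rcases Nat.lt_or_ge j (i-1) with hj | hj
    · have : SplittableAt T c' j :=
        splittableAt_congr he (pieceCells_mergeX_lt _ (by omega)) (by omega) hsj
      exact hmax c' (Or.inl ⟨j, this⟩) hne
    rcases Nat.eq_or_lt_of_le hj with rfl | hj'
    · -- j = i - 1
      exfalso
      have hcLTc' : cellLT T'.entry c c' := by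
        apply hsj.2.2.2 c ?_ (fun hh => hne hh.symm)
        rw [hmerged, Finset.mem_union]; exact Or.inr hcm
      have hc' := hsj.2.1
      rw [hmerged, Finset.mem_union] at hc'
      rcases hc' with hc' | hc'
      · exact cellLT_asymm _ hcLTc' (by rw [he] at hcLTc' ⊢; exact hgt c' hc')
      · rw [hPi, Finset.mem_singleton] at hc'
        exact hne hc'
    · -- j ≥ i
      have : SplittableAt T c' (j+1) :=
        splittableAt_congr he (pieceCells_mergeX_ge _ (by omega)) (by omega) hsj
      exact hmax c' (Or.inl ⟨j+1, this⟩) hne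
  · -- mergeable in T' at j
    have hj1 := hmj.1
    have hjk : j < T.k - 1 := by rw [← hk']; exact hmj.2.1
    rcases Nat.lt_or_ge j (i-1) with hj | hj
    · have : MergeableAt T c' j :=
        mergeableAt_congr he hj1 (by omega) (pieceCells_mergeX_lt _ (by omega))
          (pieceCells_mergeX_lt _ (by omega)) hmj
      exact hmax c' (Or.inr ⟨j, this⟩) hne
    rcases Nat.eq_or_lt_of_le hj with rfl | hj'
    · -- j = i - 1 : merged piece has card ≥ 2 but mergeable needs card 1
      exfalso
      have h4 := hmj.2.2.2.1
      rw [hmerged] at h4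
      have : 1 < (pieceCells T (i-1) ∪ pieceCells T i).card := by
        obtain ⟨a, ha⟩ := pieceCells_nonempty T (show i - 1 < T.k by omega)
        have hac : a ≠ c := by
          intro hh
          rw [hh] at ha
          have := mem_pieceCells_unique T ha hcm
          omega
        exact Finset.one_lt_card.mpr ⟨a, Finset.mem_union_left _ ha, c,
          Finset.mem_union_right _ hcm, hac⟩
      omega
    rcases Nat.eq_or_lt_of_le (Nat.succ_le_of_lt hj') with hj2 | hj2
    · -- j = i : new mergeable cell above c
      have hj3 : j = i := by omega
      subst hj3
      have hpc : pieceCells T' j = pieceCells T (j+1) := pieceCells_mergeX_ge _ le_rfl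
      have hcc' : cellLT T.entry c c' := by
        have := hmj.2.2.2.2.2 c (by
          have e : j - 1 = j - 1 := rfl
          rw [hmerged, Finset.mem_union]
          exact Or.inr hcm)
        rwa [he] at this
      have hMT : MergeableAt T c' (j+1) := by
        apply mergeableAt_of (by omega) (by omega)
        · have h4 := hmj.2.2.2.1
          have h3 := hmj.2.2.1
          rw [hpc] at h4 h3
          exact piece_eq_singleton h3 h4
        · intro q hq
          have e : j + 1 - 1 = j := by omega
          rw [e, hPi, Finset.mem_singleton] at hq
          rw [hq]
          exact hcc'
      exact hmax c' (Or.inr ⟨j+1, hMT⟩) hne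
    · -- j ≥ i + 1
      have : MergeableAt T c' (j+1) := by
        apply mergeableAt_congr he (by omega) (by omega)
          (pieceCells_mergeX_ge _ (by omega)) ?_ hmj
        have e1 : j + 1 - 1 = j := by omega
        rw [e1]
        have := pieceCells_mergeX_ge (T := T) (c := c)
          (h := ⟨hi1, hik, hcm, hcard, hun, hgt⟩) (show i ≤ j - 1 by omega)
        rw [this]
        congr 1
        omega
      exact hmax c' (Or.inr ⟨j+1, this⟩) hne

end Involution2
section Roundtrip

variable {μ lam : YoungDiagram}

lemma mergeX_eq_of {T : XTuple μ lam} {c c' : ℕ × ℕ} {i i' : ℕ}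
    (h : MergeableAt T c i) (h' : MergeableAt T c' i') (hii : i = i') :
    mergeX T c i h = mergeX T c' i' h' := by
  subst hii; rfl

lemma splitX_eq_of {T : XTuple μ lam} {c c' : ℕ × ℕ} {i i' : ℕ}
    (h : SplittableAt T c i) (h' : SplittableAt T c' i') (hcc : c = c') (hii : i = i') :
    splitX T c i h = splitX T c' i' h' := by
  subst hcc; subst hii; rfl

lemma mergeX_splitX {T : XTuple μ lam} {c : ℕ × ℕ} {i : ℕ} (hs : SplittableAt T c i)
    (hm : MergeableAt (splitX T c i hs) c (i+1)) :
    mergeX (splitX T c i hs) c (i+1) hm = T := by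
  apply XTuple.ext'
  · rw [mergeX_k, splitX_k]; omega
  · funext j
    rw [mergeX_chain]
    rcases Nat.lt_or_ge j (i+1) with hj | hj
    · rw [mergeChain_lt hj, splitX_chain, splitChain_le hs (by omega)]
    · rw [mergeChain_ge hj, splitX_chain, splitChain_ge hs (by omega)]
      exact congrArg T.chain (by omega : j + 1 - 1 = j)
  · rfl

lemma splitX_mergeX {T : XTuple μ lam} {c : ℕ × ℕ} {i : ℕ} (hm : MergeableAt T c i)
    (hs : SplittableAt (mergeX T c i hm) c (i-1)) :
    splitX (mergeX T c i hm) c (i-1) hs = T := by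
  have hi1 := hm.1
  have hik := hm.2.1
  have hPi : pieceCells T i = {c} := piece_eq_singleton hm.2.2.1 hm.2.2.2.1
  apply XTuple.ext'
  · rw [splitX_k, mergeX_k]; omega
  · funext j
    rw [splitX_chain]
    rcases Nat.lt_or_ge j i with hj | hj
    · rw [splitChain_le hs (by omega), mergeX_chain, mergeChain_lt hj]
    rcases Nat.eq_or_lt_of_le hj with rfl | hj'
    · -- j = i : the middle diagram
      apply YoungDiagram.ext
      have hmid := splitChain_mid_cells hs
      rw [mergeX_chain, mergeChain_ge (show i ≤ i - 1 + 1 by omega)] at hmid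
      rw [show i - 1 + 1 = i from by omega] at hmid
      rw [hmid]
      ext q
      rw [Finset.mem_erase]
      constructor
      · rintro ⟨hq1, hq2⟩
        by_contra hq3
        have : q ∈ pieceCells T i := Finset.mem_sdiff.mpr ⟨hq2, hq3⟩
        rw [hPi, Finset.mem_singleton] at this
        exact hq1 this
      · intro hq
        refine ⟨?_, chain_mono T (by omega) hq⟩
        intro hqc
        rw [hqc] at hq
        exact (mem_piece_not_chain (by rw [hPi]; exact Finset.mem_singleton_self c)).2 hq
    · -- j ≥ i + 1
      rw [splitChain_ge hs (by omega), mergeX_chain, mergeChain_ge (by omega)]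
      exact congrArg T.chain (by omega : j - 1 + 1 = j)
  · rfl

/-- The sign-reversing involution (on non-fixed points of `cellOf`). -/
noncomputable def invol (T : XTuple μ lam) : XTuple μ lam := by
  classical
  exact if h : ∃ p : (ℕ × ℕ) × ℕ, cellOf T = some p.1 ∧ SplittableAt T p.1 p.2
  then splitX T h.choose.1 h.choose.2 h.choose_spec.2
  else if h' : ∃ p : (ℕ × ℕ) × ℕ, cellOf T = some p.1 ∧ MergeableAt T p.1 p.2
  then mergeX T h'.choose.1 h'.choose.2 h'.choose_spec.2
  else T

lemma invol_eq_split {T : XTuple μ lam} {a : ℕ × ℕ} {b : ℕ} (hcell : cellOf T = some a)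
    (hs : SplittableAt T a b) : invol T = splitX T a b hs := by
  classical
  rw [invol]
  have hex : ∃ p : (ℕ × ℕ) × ℕ, cellOf T = some p.1 ∧ SplittableAt T p.1 p.2 :=
    ⟨(a, b), hcell, hs⟩
  rw [dif_pos hex]
  obtain ⟨hd1, hd2⟩ := hex.choose_spec
  have hde : hex.choose.1 = a := Option.some_inj.mp (hd1.symm.trans hcell)
  rw [hde] at hd2
  exact splitX_eq_of hex.choose_spec.2 hs hde (splittableAt_unique hd2 hs)

lemma invol_eq_merge {T : XTuple μ lam} {a : ℕ × ℕ} {b : ℕ} (hcell : cellOf T = some a)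
    (hm : MergeableAt T a b) (hnos : ∀ j, ¬ SplittableAt T a j) :
    invol T = mergeX T a b hm := by
  classical
  rw [invol]
  have hnosplit : ¬ ∃ p : (ℕ × ℕ) × ℕ, cellOf T = some p.1 ∧ SplittableAt T p.1 p.2 := by
    rintro ⟨p, hp1, hp2⟩
    have : p.1 = a := Option.some_inj.mp (hp1.symm.trans hcell)
    rw [this] at hp2
    exact hnos p.2 hp2
  have hex' : ∃ p : (ℕ × ℕ) × ℕ, cellOf T = some p.1 ∧ MergeableAt T p.1 p.2 :=
    ⟨(a, b), hcell, hm⟩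
  rw [dif_neg hnosplit, dif_pos hex']
  obtain ⟨hd1, hd2⟩ := hex'.choose_spec
  have hde : hex'.choose.1 = a := Option.some_inj.mp (hd1.symm.trans hcell)
  rw [hde] at hd2
  exact mergeX_eq_of hex'.choose_spec.2 hm (mergeableAt_unique hd2 hm)

lemma invol_spec {T : XTuple μ lam} {c : ℕ × ℕ} (h : cellOf T = some c) :
    (invol T).entry = T.entry ∧ invol (invol T) = T ∧
      ((invol T).k = T.k + 1 ∨ T.k = (invol T).k + 1) ∧ cellOf (invol T) = some c := by
  classical
  obtain ⟨hgood, hmax⟩ := cellOf_spec h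
  rcases hgood with ⟨i, hsi⟩ | ⟨i, hmi⟩
  · -- split case
    have hI : invol T = splitX T c i hsi := invol_eq_split h hsi
    obtain ⟨hcell', hm'⟩ := cellOf_splitX hmax hsi
    refine ⟨by rw [hI]; rfl, ?_, by rw [hI, splitX_k]; omega, by rw [hI]; exact hcell'⟩
    rw [hI]
    rw [invol_eq_merge hcell' hm' (fun j hsj => not_split_and_merge hsj hm')]
    exact mergeX_splitX hsi hm'
  · -- merge case
    have hno : ∀ j, ¬ SplittableAt T c j := fun j hsj => not_split_and_merge hsj hmi
    have hI : invol T = mergeX T c i hmi := invol_eq_merge h hmi hno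
    obtain ⟨hcell', hs'⟩ := cellOf_mergeX hmax hmi
    have hi1 := hmi.1
    have hik := hmi.2.1
    refine ⟨by rw [hI]; rfl, ?_, by rw [hI, mergeX_k]; omega, by rw [hI]; exact hcell'⟩
    rw [hI]
    rw [invol_eq_split hcell' hs']
    exact splitX_mergeX hmi hs'

end Roundtrip
section Fixed

variable {μ lam : YoungDiagram}

lemma fixed_pieces_card {T : XTuple μ lam} (hfix : cellOf T = none) {i : ℕ} (hi : i < T.k) :
    (pieceCells T i).card = 1 := by
  have hno := cellOf_eq_none_iff.mp hfix
  by_contra hcard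
  have h1 : 1 < (pieceCells T i).card := by
    have := (pieceCells_nonempty T hi).card_pos
    omega
  obtain ⟨c, hc, hcmax⟩ := exists_max_cell T.entry (pieceCells_nonempty T hi)
  exact hno c (Or.inl ⟨i, hi, hc, h1, hcmax⟩)

lemma fixed_piece_singleton {T : XTuple μ lam} (hfix : cellOf T = none) {i : ℕ}
    (hi : i < T.k) : ∃ c, pieceCells T i = {c} :=
  Finset.card_eq_one.mp (fixed_pieces_card hfix hi)

lemma fixed_k {T : XTuple μ lam} (hsub : μ ≤ lam) (hfix : cellOf T = none) :
    T.k = (skewCells μ lam).card := by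
  have hstep : ∀ i ≤ T.k, ((T.chain i).cells).card = μ.cells.card + i := by
    intro i
    induction i with
    | zero => intro _; rw [T.chain_zero]; omega
    | succ m ih =>
      intro hm
      have h1 := ih (by omega)
      have hsubm : (T.chain m).cells ⊆ (T.chain (m+1)).cells := chain_mono T (by omega)
      have h2 : (pieceCells T m).card = 1 := fixed_pieces_card hfix (by omega)
      rw [pieceCells, Finset.card_sdiff_of_subset hsubm] at h2
      have h3 := Finset.card_le_card hsubm
      omega
  have := hstep T.k le_rfl
  rw [T.chain_last T.k le_rfl] at this
  rw [skewCells, Finset.card_sdiff_of_subset (YoungDiagram.cells_subset_iff.mpr hsub)]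
  omega

/-- In a fixed point, cells of later pieces are smaller. -/
lemma fixed_dec {T : XTuple μ lam} (hfix : cellOf T = none) :
    ∀ b, b < T.k → ∀ a, a < b → ∀ c ∈ pieceCells T a, ∀ c' ∈ pieceCells T b,
      cellLT T.entry c' c := by
  have hno := cellOf_eq_none_iff.mp hfix
  intro b
  induction b with
  | zero => intro _ a ha; omega
  | succ m ih =>
    intro hm a ha c hc c' hc'
    have hadj : ∀ d ∈ pieceCells T m, cellLT T.entry c' d := by
      intro d hd
      obtain ⟨e, he⟩ := fixed_piece_singleton hfix (show m < T.k by omega)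
      have hde : d = e := by rwa [he, Finset.mem_singleton] at hd
      obtain ⟨e', he'⟩ := fixed_piece_singleton hfix hm
      have hce' : c' = e' := by rwa [he', Finset.mem_singleton] at hc'
      have hne : e' ≠ e := by
        intro hh
        have h1m : e' ∈ pieceCells T (m+1) := by rw [he']; exact Finset.mem_singleton_self e'
        have h2m : e' ∈ pieceCells T m := by rw [he, hh]; exact Finset.mem_singleton_self e
        have := mem_pieceCells_unique T h2m h1m
        omega
      -- if cellLT e e' then mergeable
      have hnm : ¬ cellLT T.entry e e' := by
        intro hlt
        apply hno e' (Or.inr ⟨m + 1, ?_⟩)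
        apply mergeableAt_of (by omega) hm
        · exact he'
        · intro q hq
          have hq' : q ∈ pieceCells T m := hq
          rw [he, Finset.mem_singleton] at hq'
          rw [hq']
          exact hlt
      rcases cellLT_total T.entry hne.symm with hlt | hlt
      · exact absurd hlt hnm
      · rw [hde, hce']; exact hlt
    rcases Nat.lt_or_ge a m with ham | ham
    · obtain ⟨d, hd⟩ := pieceCells_nonempty T (show m < T.k by omega)
      exact cellLT_trans T.entry (hadj d hd) (ih (by omega) a ham c hc d hd)
    · have : a = m := by omega
      subst this
      exact hadj c hc

lemma fixed_piece_lt {T : XTuple μ lam} {c : ℕ × ℕ} {a b : ℕ}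
    (hc : c ∈ pieceCells T a) (hb : b < T.k)
    (hcb : c ∈ (T.chain (b+1)).cells) : a ≤ b := by
  by_contra hab
  push_neg at hab
  exact (mem_piece_not_chain hc).2 (chain_mono T (show b + 1 ≤ a by omega) hcb)

/-- The entry filling of a fixed point is a row-strict plane partition. -/
lemma fixed_rspp {T : XTuple μ lam} (hfix : cellOf T = none) :
    IsRSPPOn T.entry (skewCells μ lam) := by
  -- adjacent comparisons
  have hS : ∀ x : ℕ × ℕ, x ∈ skewCells μ lam ↔ (x ∈ lam.cells ∧ x ∉ μ.cells) := by
    intro x; rw [skewCells, Finset.mem_sdiff]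
  have key : ∀ (x y : ℕ × ℕ), x ∈ skewCells μ lam → y ∈ skewCells μ lam →
      y ≤ x → y ≠ x → cellLT T.entry x y := by
    intro x y hx hy hyx hne
    obtain ⟨a, hak, ha⟩ := exists_piece_mem T hy
    obtain ⟨b, hbk, hb⟩ := exists_piece_mem T hx
    have hab : a ≤ b := by
      apply fixed_piece_lt ha hbk
      exact (T.chain (b+1)).isLowerSet hyx (mem_piece_not_chain hb).1
    have hanb : a ≠ b := by
      intro hh
      subst hh
      obtain ⟨e, he⟩ := fixed_piece_singleton hfix hak
      rw [he, Finset.mem_singleton] at ha hb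
      exact hne (ha.trans hb.symm)
    exact fixed_dec hfix b hbk a (by omega) y ha x hb
  refine ⟨fun c hc => entry_pos T hc, ?_, ?_⟩
  · -- rows: strict decrease
    have adj : ∀ r s, (r, s) ∈ skewCells μ lam → (r, s+1) ∈ skewCells μ lam →
        T.entry (r, s+1) < T.entry (r, s) := by
      intro r s h1 h2
      have hlt := key (r, s+1) (r, s) h2 h1 (by simp [Prod.le_def]) (by simp)
      rcases hlt with h | ⟨he, h | ⟨h, _⟩⟩
      · exact h
      · simp at h
      · simp at h
    have gen : ∀ d r s, (r, s) ∈ skewCells μ lam → (r, s + d + 1) ∈ skewCells μ lam →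
        T.entry (r, s + d + 1) < T.entry (r, s) := by
      intro d
      induction d with
      | zero => intro r s h1 h2; exact adj r s h1 h2
      | succ m ihm =>
        intro r s h1 h2
        have h2' : (r, (s + m + 1) + 1) ∈ skewCells μ lam := by
          rw [show (s + m + 1) + 1 = s + (m+1) + 1 from by omega]; exact h2
        have hmid : (r, s + m + 1) ∈ skewCells μ lam := by
          rw [hS] at h1 h2' ⊢
          exact ⟨lam.isLowerSet (Prod.mk_le_mk.mpr ⟨by omega, by omega⟩) h2'.1,
            fun hmem => h1.2 (μ.isLowerSet (Prod.mk_le_mk.mpr ⟨by omega, by omega⟩) hmem)⟩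
        have hfin := lt_trans (adj r (s + m + 1) hmid h2') (ihm r s h1 hmid)
        rwa [show (s + m + 1) + 1 = s + (m+1) + 1 from by omega] at hfin
    intro r s s' hss h1 h2
    have e : s' = s + (s' - s - 1) + 1 := by omega
    rw [e] at h2 ⊢
    exact gen (s' - s - 1) r s h1 h2
  · -- columns: weak decrease
    have adj : ∀ r s, (r, s) ∈ skewCells μ lam → (r+1, s) ∈ skewCells μ lam →
        T.entry (r+1, s) ≤ T.entry (r, s) := by
      intro r s h1 h2
      have hlt := key (r+1, s) (r, s) h2 h1 (by simp [Prod.le_def]) (by simp)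
      rcases hlt with h | ⟨he, h⟩
      · exact le_of_lt h
      · exact le_of_eq he
    have gen : ∀ d r s, (r, s) ∈ skewCells μ lam → (r + d + 1, s) ∈ skewCells μ lam →
        T.entry (r + d + 1, s) ≤ T.entry (r, s) := by
      intro d
      induction d with
      | zero => intro r s h1 h2; exact adj r s h1 h2
      | succ m ihm =>
        intro r s h1 h2
        have h2' : ((r + m + 1) + 1, s) ∈ skewCells μ lam := by
          rw [show (r + m + 1) + 1 = r + (m+1) + 1 from by omega]; exact h2
        have hmid : (r + m + 1, s) ∈ skewCells μ lam := by
          rw [hS] at h1 h2' ⊢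
          exact ⟨lam.isLowerSet (Prod.mk_le_mk.mpr ⟨by omega, by omega⟩) h2'.1,
            fun hmem => h1.2 (μ.isLowerSet (Prod.mk_le_mk.mpr ⟨by omega, by omega⟩) hmem)⟩
        have hfin := le_trans (adj (r + m + 1) s hmid h2') (ihm r s h1 hmid)
        rwa [show (r + m + 1) + 1 = r + (m+1) + 1 from by omega] at hfin
    intro r r' s hrr h1 h2
    rcases Nat.eq_or_lt_of_le hrr with rfl | hlt
    · exact le_rfl
    · have e : r' = r + (r' - r - 1) + 1 := by omega
      rw [e] at h2 ⊢
      exact gen (r' - r - 1) r s h1 h2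

end Fixed
section FixedInj

variable {μ lam : YoungDiagram}

lemma fixed_piece_max {T : XTuple μ lam} (hfix : cellOf T = none) {m : ℕ} (hm : m < T.k)
    {e : ℕ × ℕ} (he : pieceCells T m = {e}) :
    e ∈ skewCells μ lam \ (T.chain m).cells ∧
      ∀ q ∈ skewCells μ lam \ (T.chain m).cells, q ≠ e → cellLT T.entry q e := by
  have hem : e ∈ pieceCells T m := by rw [he]; exact Finset.mem_singleton_self e
  constructor
  · rw [Finset.mem_sdiff]
    exact ⟨pieceCells_subset_skew T m hem, (mem_piece_not_chain hem).2⟩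
  · intro q hq hqe
    rw [Finset.mem_sdiff] at hq
    obtain ⟨b, hbk, hb⟩ := exists_piece_mem T hq.1
    have hbm : m ≤ b := by
      by_contra hh
      push_neg at hh
      exact hq.2 (chain_mono T (show b + 1 ≤ m by omega) (mem_piece_not_chain hb).1)
    rcases Nat.eq_or_lt_of_le hbm with rfl | hlt
    · rw [he, Finset.mem_singleton] at hb
      exact absurd hb hqe
    · exact fixed_dec hfix b hbk m hlt e hem q hb

lemma max_unique {f : ℕ × ℕ → ℕ} {R : Finset (ℕ × ℕ)} {e e' : ℕ × ℕ}
    (h1 : e ∈ R) (h2 : ∀ q ∈ R, q ≠ e → cellLT f q e)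
    (h3 : e' ∈ R) (h4 : ∀ q ∈ R, q ≠ e' → cellLT f q e') : e = e' := by
  by_contra hne
  exact cellLT_asymm f (h2 e' h3 (fun hh => hne hh.symm)) (h4 e h1 hne)

lemma fixed_entry_inj {T T' : XTuple μ lam} (hsub : μ ≤ lam)
    (hfT : cellOf T = none) (hfT' : cellOf T' = none)
    (he : T.entry = T'.entry) : T = T' := by
  have hk : T.k = T'.k := by rw [fixed_k hsub hfT, fixed_k hsub hfT']
  have hchain : ∀ j, T.chain j = T'.chain j := by
    intro j
    induction j with
    | zero => rw [T.chain_zero, T'.chain_zero]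
    | succ m ihm =>
      rcases Nat.lt_or_ge m T.k with hm | hm
      · obtain ⟨e, hpe⟩ := fixed_piece_singleton hfT hm
        obtain ⟨e', hpe'⟩ := fixed_piece_singleton hfT' (hk ▸ hm)
        obtain ⟨hmem, hmax⟩ := fixed_piece_max hfT hm hpe
        obtain ⟨hmem', hmax'⟩ := fixed_piece_max hfT' (hk ▸ hm) hpe'
        rw [← ihm] at hmem' hmax'
        rw [← he] at hmax'
        have hee : e = e' := max_unique hmem hmax hmem' hmax'
        apply YoungDiagram.ext
        have hcells : ∀ (U : XTuple μ lam) (mm : ℕ) (ee : ℕ × ℕ),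
            pieceCells U mm = {ee} →
            (U.chain (mm+1)).cells = insert ee (U.chain mm).cells := by
          intro U mm ee hU
          ext q
          rw [Finset.mem_insert]
          constructor
          · intro hq
            by_cases hqc : q ∈ (U.chain mm).cells
            · exact Or.inr hqc
            · left
              have : q ∈ pieceCells U mm := Finset.mem_sdiff.mpr ⟨hq, hqc⟩
              rwa [hU, Finset.mem_singleton] at this
          · rintro (rfl | hq)
            · exact (mem_piece_not_chain (by rw [hU]; exact Finset.mem_singleton_self q)).1
            · exact chain_mono U (by omega) hq
        rw [hcells T m e hpe, hcells T' m e' hpe', ihm, hee]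
      · rw [T.chain_last (m+1) (by omega), T'.chain_last (m+1) (by omega)]
  exact XTuple.ext' hk (funext hchain) he

end FixedInj
section FixedSurj

open scoped Classical

variable {μ lam : YoungDiagram}

/-- Number of cells of `S` strictly greater than `c` in the `cellLT f` order. -/
noncomputable def rankOf (f : ℕ × ℕ → ℕ) (S : Finset (ℕ × ℕ)) (c : ℕ × ℕ) : ℕ :=
  (S.filter fun c' => cellKey f c < cellKey f c').card

lemma rankOf_lt_card {f : ℕ × ℕ → ℕ} {S : Finset (ℕ × ℕ)} {c : ℕ × ℕ} (hc : c ∈ S) :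
    rankOf f S c < S.card := by
  have hsub : (S.filter fun c' => cellKey f c < cellKey f c') ⊆ S.erase c := by
    intro q hq
    rw [Finset.mem_filter] at hq
    rw [Finset.mem_erase]
    exact ⟨fun hh => by rw [hh] at hq; exact lt_irrefl _ hq.2, hq.1⟩
  calc rankOf f S c ≤ (S.erase c).card := Finset.card_le_card hsub
  _ < S.card := Finset.card_erase_lt_of_mem hc

lemma rankOf_anti {f : ℕ × ℕ → ℕ} {S : Finset (ℕ × ℕ)} {c c' : ℕ × ℕ}
    (hc' : c' ∈ S) (hkey : cellKey f c < cellKey f c') :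
    rankOf f S c' < rankOf f S c := by
  apply Finset.card_lt_card
  constructor
  · intro q hq
    rw [Finset.mem_filter] at hq ⊢
    exact ⟨hq.1, lt_trans hkey hq.2⟩
  · intro hcon
    have : c' ∈ S.filter fun q => cellKey f c < cellKey f q :=
      Finset.mem_filter.mpr ⟨hc', hkey⟩
    have := hcon this
    rw [Finset.mem_filter] at this
    exact lt_irrefl _ this.2

lemma rankOf_lt_iff {f : ℕ × ℕ → ℕ} {S : Finset (ℕ × ℕ)} {c c' : ℕ × ℕ}
    (hc : c ∈ S) (hc' : c' ∈ S) :
    rankOf f S c' < rankOf f S c ↔ cellKey f c < cellKey f c' := by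
  constructor
  · intro h
    rcases lt_trichotomy (cellKey f c) (cellKey f c') with hk | hk | hk
    · exact hk
    · rw [cellKey_injective f hk] at h; omega
    · have := rankOf_anti hc hk; omega
  · exact rankOf_anti hc'

lemma rankOf_injOn {f : ℕ × ℕ → ℕ} {S : Finset (ℕ × ℕ)} {c c' : ℕ × ℕ}
    (hc : c ∈ S) (hc' : c' ∈ S) (h : rankOf f S c = rankOf f S c') : c = c' := by
  rcases lt_trichotomy (cellKey f c) (cellKey f c') with hk | hk | hk
  · have := rankOf_anti hc' hk; omega
  · exact cellKey_injective f hk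
  · have := rankOf_anti hc hk; omega

lemma rankOf_surj {f : ℕ × ℕ → ℕ} {S : Finset (ℕ × ℕ)} {j : ℕ} (hj : j < S.card) :
    ∃ c ∈ S, rankOf f S c = j := by
  have himg : S.image (rankOf f S) = Finset.range S.card := by
    apply Finset.eq_of_subset_of_card_le
    · intro q hq
      rw [Finset.mem_image] at hq
      obtain ⟨c, hc, rfl⟩ := hq
      rw [Finset.mem_range]
      exact rankOf_lt_card hc
    · rw [Finset.card_range, Finset.card_image_of_injOn]
      intro a ha b hb
      exact rankOf_injOn ha hb
  have : j ∈ Finset.range S.card := Finset.mem_range.mpr hj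
  rw [← himg, Finset.mem_image] at this
  obtain ⟨c, hc, hcj⟩ := this
  exact ⟨c, hc, hcj⟩

/-- The geometric comparison: in an RSPP, smaller cells (componentwise) have larger keys. -/
lemma rspp_key_lt {f : ℕ × ℕ → ℕ} (hf : IsRSPPOn f (skewCells μ lam))
    {x y : ℕ × ℕ} (hx : x ∈ skewCells μ lam) (hy : y ∈ skewCells μ lam)
    (hyx : y ≤ x) (hne : y ≠ x) : cellKey f x < cellKey f y := by
  obtain ⟨r, s⟩ := x
  obtain ⟨r', s'⟩ := y
  obtain ⟨h1, h2⟩ := Prod.mk_le_mk.mp hyx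
  have hx2 := hx
  have hy2 := hy
  rw [skewCells, Finset.mem_sdiff] at hx2 hy2
  rcases Nat.lt_or_ge s' s with hss | hss
  · -- s' < s : strictly smaller column
    have hmid : (r, s') ∈ skewCells μ lam := by
      rw [skewCells, Finset.mem_sdiff]
      constructor
      · exact lam.isLowerSet (Prod.mk_le_mk.mpr ⟨le_rfl, by omega⟩) hx2.1
      · intro hmem
        exact hy2.2 (μ.isLowerSet (Prod.mk_le_mk.mpr ⟨h1, le_rfl⟩) hmem)
    have hlt1 : f (r, s) < f (r, s') := hf.2.1 r s' s hss hmid hx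
    have hle2 : f (r, s') ≤ f (r', s') := hf.2.2 r' r s' h1 hy hmid
    rw [← cellLT_iff]
    exact Or.inl (by omega)
  · have hs : s' = s := by omega
    subst hs
    have hr : r' < r := by
      rcases Nat.lt_or_ge r' r with h | h
      · exact h
      · exfalso; exact hne (by rw [Prod.mk.injEq]; omega)
    have hle : f (r, s') ≤ f (r', s') := hf.2.2 r' r s' h1 hy hx
    rw [← cellLT_iff]
    rcases Nat.eq_or_lt_of_le hle with heq | hlt
    · exact Or.inr ⟨heq, Or.inr ⟨rfl, hr⟩⟩
    · exact Or.inl hlt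

end FixedSurj
section FixedOf

open scoped Classical

variable {μ lam : YoungDiagram}

/-- The cells of the `j`-th diagram in the canonical chain of an RSPP filling. -/
noncomputable def cellsF (μ lam : YoungDiagram) (f : ℕ × ℕ → ℕ) (j : ℕ) : Finset (ℕ × ℕ) :=
  μ.cells ∪ (skewCells μ lam).filter (fun c => rankOf f (skewCells μ lam) c < j)

lemma cellsF_isLowerSet {f : ℕ × ℕ → ℕ} (hf : IsRSPPOn f (skewCells μ lam)) (j : ℕ) :
    IsLowerSet ((cellsF μ lam f j : Finset (ℕ × ℕ)) : Set (ℕ × ℕ)) := by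
  intro x y hyx hx
  simp only [cellsF, Finset.coe_union, Set.mem_union, Finset.mem_coe,
    Finset.mem_filter, Finset.coe_filter, Set.mem_setOf_eq] at hx ⊢
  rcases hx with hx | ⟨hx1, hx2⟩
  · exact Or.inl (μ.isLowerSet hyx hx)
  · by_cases hyμ : y ∈ μ.cells
    · exact Or.inl hyμ
    · right
      have hxS := hx1
      rw [skewCells, Finset.mem_sdiff] at hxS
      have hyS : y ∈ skewCells μ lam := by
        rw [skewCells, Finset.mem_sdiff]
        exact ⟨lam.isLowerSet hyx hxS.1, hyμ⟩
      refine ⟨hyS, ?_⟩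
      by_cases hxy : y = x
      · rw [hxy]; exact hx2
      · have hkey := rspp_key_lt hf hx1 hyS hyx hxy
        have := rankOf_anti (S := skewCells μ lam) hyS hkey
        omega

variable (hsub : μ ≤ lam)

lemma cellsF_last {f : ℕ × ℕ → ℕ} (hsub : μ ≤ lam) {j : ℕ}
    (hj : (skewCells μ lam).card ≤ j) : cellsF μ lam f j = lam.cells := by
  rw [cellsF]
  have hfil : (skewCells μ lam).filter (fun c => rankOf f (skewCells μ lam) c < j)
      = skewCells μ lam := by
    apply Finset.filter_true_of_mem
    intro c hc
    have := rankOf_lt_card (f := f) hc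
    omega
  rw [hfil, skewCells]
  rw [Finset.union_sdiff_of_subset (YoungDiagram.cells_subset_iff.mpr hsub)]

/-- The canonical fixed point associated with an RSPP filling. -/
noncomputable def fixedOf (hsub : μ ≤ lam) (f : ℕ × ℕ → ℕ)
    (hf : IsRSPPOn f (skewCells μ lam)) (hz : ∀ c ∉ skewCells μ lam, f c = 0) :
    XTuple μ lam where
  k := (skewCells μ lam).card
  chain := fun j => ⟨cellsF μ lam f j, cellsF_isLowerSet hf j⟩
  chain_zero := by
    apply YoungDiagram.ext
    show cellsF μ lam f 0 = μ.cells
    rw [cellsF]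
    have : (skewCells μ lam).filter (fun c => rankOf f (skewCells μ lam) c < 0) = ∅ := by
      apply Finset.filter_false_of_mem
      intro c _
      omega
    rw [this, Finset.union_empty]
  chain_last := by
    intro j hj
    apply YoungDiagram.ext
    show cellsF μ lam f j = lam.cells
    exact cellsF_last hsub hj
  chain_strict := by
    intro j hj
    show cellsF μ lam f j ⊂ cellsF μ lam f (j+1)
    obtain ⟨cj, hcjS, hcj⟩ := rankOf_surj (f := f) hj
    constructor
    · intro q hq
      rw [cellsF, Finset.mem_union, Finset.mem_filter] at hq ⊢
      rcases hq with hq | ⟨hq1, hq2⟩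
      · exact Or.inl hq
      · exact Or.inr ⟨hq1, by omega⟩
    · intro hcon
      have h1 : cj ∈ cellsF μ lam f (j+1) := by
        rw [cellsF, Finset.mem_union, Finset.mem_filter]
        exact Or.inr ⟨hcjS, by omega⟩
      have h2 := hcon h1
      rw [cellsF, Finset.mem_union, Finset.mem_filter] at h2
      rcases h2 with h2 | ⟨-, h2⟩
      · rw [skewCells, Finset.mem_sdiff] at hcjS
        exact hcjS.2 h2
      · omega
  entry := f
  entry_eq_zero := hz
  piece_ssyt := by
    intro j hj
    obtain ⟨cj, hcjS, hcj⟩ := rankOf_surj (f := f) hj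
    have hset : cellsF μ lam f (j+1) \ cellsF μ lam f j = {cj} := by
      ext q
      rw [Finset.mem_sdiff, Finset.mem_singleton, cellsF, cellsF,
        Finset.mem_union, Finset.mem_union, Finset.mem_filter, Finset.mem_filter]
      constructor
      · rintro ⟨hq1, hq2⟩
        rcases hq1 with hq1 | ⟨hq1, hq3⟩
        · exact absurd (Or.inl hq1) hq2
        · push_neg at hq2
          have := hq2.2 hq1
          have hrank : rankOf f (skewCells μ lam) q = j := by omega
          exact rankOf_injOn hq1 hcjS (hrank.trans hcj.symm)
      · rintro rfl
        constructor
        · exact Or.inr ⟨hcjS, by omega⟩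
        · rintro (hq | ⟨-, hq⟩)
          · rw [skewCells, Finset.mem_sdiff] at hcjS
            exact hcjS.2 hq
          · omega
    show IsSSYTOn f (cellsF μ lam f (j+1) \ cellsF μ lam f j)
    rw [hset]
    exact isSSYTOn_singleton (hf.1 cj hcjS)

lemma fixedOf_entry {f : ℕ × ℕ → ℕ} (hf : IsRSPPOn f (skewCells μ lam))
    (hz : ∀ c ∉ skewCells μ lam, f c = 0) : (fixedOf hsub f hf hz).entry = f := rfl

lemma fixedOf_piece {f : ℕ × ℕ → ℕ} (hf : IsRSPPOn f (skewCells μ lam))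
    (hz : ∀ c ∉ skewCells μ lam, f c = 0) {j : ℕ} {cj : ℕ × ℕ} (hcjS : cj ∈ skewCells μ lam)
    (hcj : rankOf f (skewCells μ lam) cj = j) :
    pieceCells (fixedOf hsub f hf hz) j = {cj} := by
  show cellsF μ lam f (j+1) \ cellsF μ lam f j = {cj}
  ext q
  rw [Finset.mem_sdiff, Finset.mem_singleton, cellsF, cellsF,
    Finset.mem_union, Finset.mem_union, Finset.mem_filter, Finset.mem_filter]
  constructor
  · rintro ⟨hq1, hq2⟩
    rcases hq1 with hq1 | ⟨hq1, hq3⟩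
    · exact absurd (Or.inl hq1) hq2
    · push_neg at hq2
      have := hq2.2 hq1
      have hrank : rankOf f (skewCells μ lam) q = j := by omega
      exact rankOf_injOn hq1 hcjS (hrank.trans hcj.symm)
  · rintro rfl
    constructor
    · exact Or.inr ⟨hcjS, by omega⟩
    · rintro (hq | ⟨-, hq⟩)
      · rw [skewCells, Finset.mem_sdiff] at hcjS
        exact hcjS.2 hq
      · omega

lemma fixedOf_fixed {f : ℕ × ℕ → ℕ} (hf : IsRSPPOn f (skewCells μ lam))
    (hz : ∀ c ∉ skewCells μ lam, f c = 0) : cellOf (fixedOf hsub f hf hz) = none := by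
  rw [cellOf_eq_none_iff]
  intro c hgood
  set T := fixedOf hsub f hf hz with hT
  have hk : T.k = (skewCells μ lam).card := rfl
  rcases hgood with ⟨i, hsi⟩ | ⟨i, hmi⟩
  · -- splittable: piece has one cell
    obtain ⟨ci, hciS, hci⟩ := rankOf_surj (f := f) (hk ▸ hsi.1)
    have := hsi.2.2.1
    rw [fixedOf_piece hsub hf hz hciS hci] at this
    simp at this
  · -- mergeable
    obtain ⟨hi1, hik, hcm, hcard, hun, hgt⟩ := hmi
    obtain ⟨ci, hciS, hci⟩ := rankOf_surj (f := f) (hk ▸ hik)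
    obtain ⟨cp, hcpS, hcp⟩ := rankOf_surj (f := f) (show i - 1 < (skewCells μ lam).card by
      have := hk ▸ hik; omega)
    rw [fixedOf_piece hsub hf hz hciS hci, Finset.mem_singleton] at hcm
    subst hcm
    have hgtc := hgt cp (by
      rw [fixedOf_piece hsub hf hz hcpS hcp]; exact Finset.mem_singleton_self cp)
    -- but rank cp = i - 1 < i = rank c, so cellKey c < cellKey cp, i.e. cellLT c cp
    have hkey : cellKey f c < cellKey f cp :=
      (rankOf_lt_iff hciS hcpS).mp (by rw [hcp, hci]; omega)
    have hlt : cellLT f c cp := (cellLT_iff f).mpr hkey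
    exact cellLT_asymm f hlt hgtc

end FixedOf
section Finiteness

open scoped Classical

variable {μ lam : YoungDiagram}

lemma xtuple_set_finite (μ lam : YoungDiagram) (hsub : μ ≤ lam) (n : ℕ) :
    {T : XTuple μ lam | ∀ c ∈ skewCells μ lam, T.entry c ≤ n}.Finite := by
  set N := (skewCells μ lam).card with hN
  set A := {T : XTuple μ lam | ∀ c ∈ skewCells μ lam, T.entry c ≤ n} with hA
  rw [← Set.finite_coe_iff]
  have henc : ∀ T : A, (T : XTuple μ lam).k < N + 1 := by
    rintro ⟨T, hT⟩
    show T.k < N + 1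
    have := k_le_card_skew T hsub
    omega
  have hchainmem : ∀ (T : XTuple μ lam) (i : ℕ), (T.chain i).cells ∈ lam.cells.powerset :=
    fun T i => Finset.mem_powerset.mpr (chain_le_lam T i)
  have hentrymem : ∀ (T : A) (c : {c // c ∈ skewCells μ lam}),
      (T : XTuple μ lam).entry c < n + 1 := by
    rintro ⟨T, hT⟩ ⟨c, hc⟩
    show T.entry c < n + 1
    have := hT c hc
    omega
  let enc : A → Fin (N + 1) × (Fin (N + 1) → {t // t ∈ lam.cells.powerset}) ×
      ({c // c ∈ skewCells μ lam} → Fin (n + 1)) :=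
    fun T => (⟨(T : XTuple μ lam).k, henc T⟩,
      fun i => ⟨((T : XTuple μ lam).chain i).cells, hchainmem _ i⟩,
      fun c => ⟨(T : XTuple μ lam).entry c, hentrymem T c⟩)
  have hinj : Function.Injective enc := by
    rintro ⟨T, hT⟩ ⟨T', hT'⟩ heq
    have h1 := congrArg Prod.fst heq
    have h2 := congrArg (fun p => p.2.1) heq
    have h3 := congrArg (fun p => p.2.2) heq
    simp only [enc, Fin.mk.injEq] at h1 h2 h3
    have hk : T.k = T'.k := h1
    have hkN : T.k ≤ N := by have := k_le_card_skew T hsub; omega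
    have hchain : ∀ j, T.chain j = T'.chain j := by
      intro j
      rcases Nat.lt_or_ge j (N + 1) with hj | hj
      · have := congrFun h2 ⟨j, hj⟩
        apply YoungDiagram.ext
        exact congrArg Subtype.val this
      · rw [T.chain_last j (by omega), T'.chain_last j (by omega; )]
    have hentry : T.entry = T'.entry := by
      funext c
      by_cases hc : c ∈ skewCells μ lam
      · have := congrFun h3 ⟨c, hc⟩
        exact congrArg Fin.val this
      · rw [T.entry_eq_zero c hc, T'.entry_eq_zero c hc]
    simp only [Subtype.mk.injEq]
    exact XTuple.ext' hk (funext hchain) hentry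
  exact Finite.of_injective enc hinj

lemma rspp_set_finite (μ lam : YoungDiagram) (n : ℕ) :
    {f : ℕ × ℕ → ℕ |
      (IsRSPPOn f (skewCells μ lam) ∧ ∀ c ∉ skewCells μ lam, f c = 0) ∧
      ∀ c ∈ skewCells μ lam, f c ≤ n}.Finite := by
  set B := {f : ℕ × ℕ → ℕ |
      (IsRSPPOn f (skewCells μ lam) ∧ ∀ c ∉ skewCells μ lam, f c = 0) ∧
      ∀ c ∈ skewCells μ lam, f c ≤ n} with hB
  rw [← Set.finite_coe_iff]
  have hmem : ∀ (f : B) (c : {c // c ∈ skewCells μ lam}),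
      (f : ℕ × ℕ → ℕ) c < n + 1 := by
    rintro ⟨f, hf⟩ ⟨c, hc⟩
    show f c < n + 1
    have := hf.2 c hc
    omega
  let enc : B → ({c // c ∈ skewCells μ lam} → Fin (n + 1)) :=
    fun f c => ⟨(f : ℕ × ℕ → ℕ) c, hmem f c⟩
  have hinj : Function.Injective enc := by
    rintro ⟨f, hf⟩ ⟨g, hg⟩ heq
    simp only [Subtype.mk.injEq]
    funext c
    by_cases hc : c ∈ skewCells μ lam
    · have := congrFun heq ⟨c, hc⟩
      exact congrArg Fin.val this
    · rw [hf.1.2 c hc, hg.1.2 c hc]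
  exact Finite.of_injective enc hinj

end Finiteness

/-- Cancellation of Takeuchi's expansion into the fixed points:
`∑_{T ∈ X_μ^λ(n)} (−1)^{ℓ(T)} wt(T) = (−1)^{|λ|−|μ|} ∑_{U ∈ RSPP(λ/μ, n)} x^U`, where the
sums are over elements with all entries at most `n`; both sets are finite. -/
theorem takeuchi_sum_eq_rspp_sum (μ lam : YoungDiagram) (hsub : μ ≤ lam)
    (n : ℕ) (hn : 1 ≤ n) :
    ∃ (h1 : {T : XTuple μ lam | ∀ c ∈ skewCells μ lam, T.entry c ≤ n}.Finite)
      (h2 : {f : ℕ × ℕ → ℕ |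
              (IsRSPPOn f (skewCells μ lam) ∧ ∀ c ∉ skewCells μ lam, f c = 0) ∧
              ∀ c ∈ skewCells μ lam, f c ≤ n}.Finite),
      ∑ T ∈ h1.toFinset, ((-1 : MvPolynomial ℕ ℤ) ^ T.k * wt T)
        = (-1 : MvPolynomial ℕ ℤ) ^ (lam.cells.card - μ.cells.card) *
            ∑ f ∈ h2.toFinset, ∏ c ∈ skewCells μ lam, MvPolynomial.X (f c) := by
  classical
  have h1 := xtuple_set_finite μ lam hsub n
  have h2 := rspp_set_finite μ lam n
  refine ⟨h1, h2, ?_⟩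
  have hNcard : (skewCells μ lam).card = lam.cells.card - μ.cells.card :=
    Finset.card_sdiff_of_subset (YoungDiagram.cells_subset_iff.mpr hsub)
  rw [← Finset.sum_filter_add_sum_filter_not h1.toFinset (fun T => cellOf T = none)
    (fun T => (-1 : MvPolynomial ℕ ℤ) ^ T.k * wt T)]
  have hzero : ∑ T ∈ h1.toFinset.filter (fun T => ¬ cellOf T = none),
      ((-1 : MvPolynomial ℕ ℤ) ^ T.k * wt T) = 0 := by
    have g_mem : ∀ (T : XTuple μ lam)
        (hT : T ∈ h1.toFinset.filter (fun T => ¬ cellOf T = none)),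
        invol T ∈ h1.toFinset.filter (fun T => ¬ cellOf T = none) := by
      intro T hT
      rw [Finset.mem_filter] at hT ⊢
      obtain ⟨c, hc⟩ := Option.ne_none_iff_exists'.mp hT.2
      obtain ⟨he, hii, hk, hcell'⟩ := invol_spec hc
      constructor
      · rw [Set.Finite.mem_toFinset] at hT ⊢
        intro d hd
        rw [he]
        exact hT.1 d hd
      · rw [hcell']
        simp
    apply Finset.sum_involution (fun T _ => invol T) ?_ ?_ g_mem ?_
    · intro T hT
      rw [Finset.mem_filter] at hT
      obtain ⟨c, hc⟩ := Option.ne_none_iff_exists'.mp hT.2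
      obtain ⟨he, hii, hk, hcell'⟩ := invol_spec hc
      have hwt : wt (invol T) = wt T := by
        rw [wt, wt, he]
      rcases hk with hk | hk
      · rw [hk, hwt, pow_succ]
        ring
      · rw [hwt, hk, pow_succ]
        ring
    · intro T hT _
      rw [Finset.mem_filter] at hT
      obtain ⟨c, hc⟩ := Option.ne_none_iff_exists'.mp hT.2
      obtain ⟨he, hii, hk, hcell'⟩ := invol_spec hc
      intro heq
      have heq' : invol T = T := heq
      rw [heq'] at hk
      omega
    · intro T hT
      rw [Finset.mem_filter] at hT
      obtain ⟨c, hc⟩ := Option.ne_none_iff_exists'.mp hT.2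
      exact (invol_spec hc).2.1
  rw [hzero, add_zero]
  have hfix_sum : ∀ T ∈ h1.toFinset.filter (fun T => cellOf T = none),
      ((-1 : MvPolynomial ℕ ℤ) ^ T.k * wt T)
        = (-1 : MvPolynomial ℕ ℤ) ^ (lam.cells.card - μ.cells.card) * wt T := by
    intro T hT
    rw [Finset.mem_filter] at hT
    rw [fixed_k hsub hT.2, hNcard]
  rw [Finset.sum_congr rfl hfix_sum, ← Finset.mul_sum]
  congr 1
  apply Finset.sum_bij (fun (T : XTuple μ lam) _ => T.entry)
  · intro T hT
    rw [Finset.mem_filter] at hT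
    rw [Set.Finite.mem_toFinset]
    refine ⟨⟨fixed_rspp hT.2, T.entry_eq_zero⟩, ?_⟩
    rw [Set.Finite.mem_toFinset] at hT
    exact hT.1
  · intro T hT T' hT' heq
    rw [Finset.mem_filter] at hT hT'
    exact fixed_entry_inj hsub hT.2 hT'.2 heq
  · intro f hf
    rw [Set.Finite.mem_toFinset] at hf
    obtain ⟨⟨hrspp, hz⟩, hle⟩ := hf
    refine ⟨fixedOf hsub f hrspp hz, ?_, rfl⟩
    rw [Finset.mem_filter, Set.Finite.mem_toFinset]
    constructor
    · intro c hc
      rw [fixedOf_entry]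
      exact hle c hc
    · exact fixedOf_fixed hsub hrspp hz
  · intro T hT
    rfl
end

section
/- Let μ ⊆ λ be Young diagrams and n ≥ 1. The skew Schur polynomial s_{λ/μ}(x₁,…,xₙ) := ∑_{T ∈ SSYT(λ/μ, n)} x^T, where SSYT(λ/μ, n) is the set of semistandard Young tableaux of shape λ/μ with entries in {1,…,n}, is a symmetric polynomial in x₁,…,xₙ: it is invariant under every permutation of the variables. -/
open scoped BigOperators

/-!
Bender–Knuth. The permutations of `ℕ` fixing everything outside `{1, …, n}` are generated by the
adjacent transpositions `(k k+1)` with `1 ≤ k < n`, so it suffices to prove invariance under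
these. Fix such a `k`. An entry `k` or `k + 1` of a tableau is *fixed* if its column contains
both `k` and `k + 1`, and *free* otherwise. Semistandardness forces the free entries of each row
to be consecutive and to read `k^a (k+1)^b`; replacing them by `k^b (k+1)^a` gives again a
semistandard tableau with the same free cells. This is an involution on `SSYT(λ/μ, n)` that
swaps the number of entries `k` with the number of entries `k + 1` and changes nothing else, so
it turns `x^T` into `x^T` with `x_k` and `x_{k+1}` exchanged.
-/

open Finset MvPolynomial Equiv

theorem IsChain.card_filter_card_filter_le_le {α : Type*} [PartialOrder α] [DecidableLE α]
    {t : Finset α} (ht : IsChain (· ≤ ·) (t : Set α)) {m : ℕ} (hm : m ≤ #t) :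
    #{c ∈ t | #{d ∈ t | d ≤ c} ≤ m} = m := by
  set rank : α → ℕ := fun c => #{d ∈ t | d ≤ c}
  have rank_lt {c c'} (hc' : c' ∈ t) (hlt : c < c') : rank c < rank c' := by
    refine card_lt_card ⟨fun d hd => ?_, fun h => ?_⟩
    · rw [mem_filter] at hd ⊢
      exact ⟨hd.1, hd.2.trans hlt.le⟩
    · exact hlt.not_ge (mem_filter.1 (h (mem_filter.2 ⟨hc', le_rfl⟩))).2
  have rank_injOn : Set.InjOn rank t := by
    intro c hc c' hc' h
    by_contra hne
    rcases ht hc hc' hne with hle | hle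
    · exact (rank_lt hc' (hle.lt_of_ne hne)).ne h
    · exact (rank_lt hc (hle.lt_of_ne (Ne.symm hne))).ne' h
  have image_rank : t.image rank = Icc 1 #t := by
    refine eq_of_subset_of_card_le (fun i hi => ?_) ?_
    · obtain ⟨c, hc, rfl⟩ := mem_image.1 hi
      exact mem_Icc.2 ⟨card_pos.2 ⟨c, mem_filter.2 ⟨hc, le_rfl⟩⟩, card_filter_le _ _⟩
    · rw [Nat.card_Icc, card_image_of_injOn rank_injOn]; omega
  calc #{c ∈ t | rank c ≤ m}
      = #({c ∈ t | rank c ≤ m}.image rank) :=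
        (card_image_of_injOn (rank_injOn.mono (coe_subset.2 (filter_subset _ _)))).symm
    _ = #(Icc 1 m) := by
        rw [← filter_image (p := (· ≤ m)), image_rank]
        congr 1
        ext i
        simp only [mem_filter, mem_Icc]
        omega
    _ = m := by simp

theorem prod_comp_eq_of_card_fiber_eq {α β M : Type*} [CommMonoid M] [DecidableEq β]
    {s : Finset α} {u v : α → β} (f : β → M)
    (h : ∀ b, #{a ∈ s | u a = b} = #{a ∈ s | v a = b}) :
    ∏ a ∈ s, f (u a) = ∏ a ∈ s, f (v a) := by
  have mem_image_iff (w : α → β) (b : β) : b ∈ s.image w ↔ 0 < #{a ∈ s | w a = b} := by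
    simp [card_pos, filter_nonempty_iff]
  have image_eq : s.image u = s.image v := by
    ext b; rw [mem_image_iff, mem_image_iff, h]
  rw [Finset.prod_comp, Finset.prod_comp, image_eq]
  exact prod_congr rfl fun b _ => by rw [h]

theorem card_filter_eq_of_fiberwise {α β : Type*} [DecidableEq β] {t : Finset α} (f : α → β)
    {P Q : α → Prop} [DecidablePred P] [DecidablePred Q]
    (h : ∀ b, #{a ∈ {a ∈ t | f a = b} | P a} = #{a ∈ {a ∈ t | f a = b} | Q a}) :
    #{a ∈ t | P a} = #{a ∈ t | Q a} := by
  have maps (R : α → Prop) [DecidablePred R] :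
      ((({a ∈ t | R a} : Finset α)) : Set α).MapsTo f (t.image f) :=
    fun a ha => mem_image_of_mem f (mem_filter.1 (mem_coe.1 ha)).1
  rw [card_eq_sum_card_fiberwise (maps P), card_eq_sum_card_fiberwise (maps Q)]
  refine sum_congr rfl fun b _ => ?_
  rw [filter_comm, h b, filter_comm]

theorem card_filter_eq_succ_add_card_filter_eq {α : Type*} {t : Finset α} {f : α → ℕ} {k : ℕ}
    (h : ∀ a ∈ t, f a = k ∨ f a = k + 1) :
    #{a ∈ t | f a = k + 1} + #{a ∈ t | f a = k} = #t := by
  rw [← card_filter_add_card_filter_not (s := t) (fun a => f a = k + 1)]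
  congr 2
  refine filter_congr fun a ha => ?_
  have := h a ha
  omega

theorem rename_eq_of_mem_closure {σ R : Type*} [CommSemiring R] {p : MvPolynomial σ R}
    {S : Set (Perm σ)} (hS : ∀ τ ∈ S, rename τ p = p) {π : Perm σ}
    (hπ : π ∈ Subgroup.closure S) : rename π p = p := by
  induction hπ using Subgroup.closure_induction with
  | mem τ hτ => exact hS τ hτ
  | one => rw [Perm.coe_one, rename_id, AlgHom.id_apply]
  | mul τ τ' _ _ hτ hτ' => rw [Perm.coe_mul, ← rename_rename, hτ', hτ]
  | inv τ _ hτ =>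
    conv_lhs => rw [← hτ]
    rw [rename_rename, ← Perm.coe_mul, inv_mul_cancel, Perm.coe_one, rename_id, AlgHom.id_apply]

theorem mem_closure_swap_succ {a b : ℕ} {π : Perm ℕ} (hπ : ∀ m, m ∉ Icc a b → π m = m) :
    π ∈ Subgroup.closure {τ : Perm ℕ | ∃ k, a ≤ k ∧ k + 1 ≤ b ∧ τ = swap k (k + 1)} := by
  set S := {τ : Perm ℕ | ∃ k, a ≤ k ∧ k + 1 ≤ b ∧ τ = swap k (k + 1)}
  have hS : ∀ τ ∈ S, τ.IsSwap := by
    rintro _ ⟨k, -, -, rfl⟩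
    exact ⟨k, k + 1, by omega, rfl⟩
  have mem_orbit (x : ℕ) (hx : x ∈ Icc a b) : x ∈ MulAction.orbit (Subgroup.closure S) a := by
    obtain ⟨hax, hxb⟩ := mem_Icc.1 hx
    induction x, hax using Nat.le_induction with
    | base => exact MulAction.mem_orbit_self a
    | succ x hax ih =>
      have hτ : swap x (x + 1) ∈ Subgroup.closure S := Subgroup.subset_closure ⟨x, hax, hxb, rfl⟩
      simpa using MulAction.mem_orbit_of_mem_orbit ⟨_, hτ⟩
        (ih (mem_Icc.2 ⟨hax, by omega⟩) (by omega))
  refine (mem_closure_isSwap hS).2 ⟨(finite_toSet (Icc a b)).subset fun m hm => ?_, fun x => ?_⟩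
  · by_contra h
    exact hm (hπ m h)
  · by_cases hx : x ∈ Icc a b
    · have hπx : π x ∈ Icc a b := by
        by_contra h
        rw [π.injective (hπ _ h)] at h
        exact h hx
      rw [MulAction.orbit_eq_iff.2 (mem_orbit x hx)]
      exact mem_orbit _ hπx
    · rw [hπ x hx]
      exact MulAction.mem_orbit_self x

theorem ordConnected_skewCells (μ lam : YoungDiagram) :
    (skewCells μ lam : Set (ℕ × ℕ)).OrdConnected := by
  rw [skewCells, coe_sdiff, Set.sdiff_eq]
  exact lam.isLowerSet.ordConnected.inter μ.isLowerSet.compl.ordConnected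

def boundedSSYT (s : Finset (ℕ × ℕ)) (n : ℕ) : Set (ℕ × ℕ → ℕ) :=
  {g | (IsSSYTOn g s ∧ ∀ c ∉ s, g c = 0) ∧ ∀ c ∈ s, g c ≤ n}

theorem finite_boundedSSYT (s : Finset (ℕ × ℕ)) (n : ℕ) : (boundedSSYT s n).Finite := by
  refine (Set.finite_range fun f : s → Fin (n + 1) => fun c =>
    if hc : c ∈ s then (f ⟨c, hc⟩ : ℕ) else 0).subset fun g hg => ?_
  refine ⟨fun c => ⟨g c, Nat.lt_succ_of_le (hg.2 c c.2)⟩, funext fun c => ?_⟩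
  dsimp only
  split_ifs with hc
  · rfl
  · exact (hg.1.2 c hc).symm

noncomputable def schurPoly (R : Type*) [CommSemiring R] (s : Finset (ℕ × ℕ)) (n : ℕ) :
    MvPolynomial ℕ R :=
  ∑ g ∈ (finite_boundedSSYT s n).toFinset, ∏ c ∈ s, X (g c)

namespace BenderKnuth

def below (c : ℕ × ℕ) : ℕ × ℕ := (c.1 + 1, c.2)

theorem below_injective : Function.Injective below := fun c d h => by
  simp only [below, Prod.mk.injEq, add_left_inj] at h
  exact Prod.ext h.1 h.2

theorem _root_.IsSSYTOn.lt_below {f : ℕ × ℕ → ℕ} {s : Finset (ℕ × ℕ)} (hf : IsSSYTOn f s)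
    {c : ℕ × ℕ} (hc : c ∈ s) (hc' : below c ∈ s) : f c < f (below c) :=
  hf.2.2 c.1 (c.1 + 1) c.2 (Nat.lt_succ_self _) hc hc'

theorem _root_.IsSSYTOn.le_of_fst_eq {f : ℕ × ℕ → ℕ} {s : Finset (ℕ × ℕ)} (hf : IsSSYTOn f s)
    {c d : ℕ × ℕ} (hc : c ∈ s) (hd : d ∈ s) (hrow : c.1 = d.1) (hle : c.2 ≤ d.2) :
    f c ≤ f d := by
  obtain ⟨i, j⟩ := c
  obtain ⟨i', j'⟩ := d
  obtain rfl : i = i' := hrow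
  exact hf.2.1 i j j' hle hc hd

theorem isSSYTOn_of_lt_below {f : ℕ × ℕ → ℕ} {s : Finset (ℕ × ℕ)}
    (hs : (s : Set (ℕ × ℕ)).OrdConnected) (hpos : ∀ c ∈ s, 0 < f c)
    (hrow : ∀ i j j', j ≤ j' → (i, j) ∈ s → (i, j') ∈ s → f (i, j) ≤ f (i, j'))
    (hcol : ∀ c ∈ s, below c ∈ s → f c < f (below c)) : IsSSYTOn f s := by
  refine ⟨hpos, hrow, fun i i' j hii' hi hi' => ?_⟩
  induction i', hii' using Nat.le_induction with
  | base => exact hcol _ hi hi'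
  | succ m hm ih =>
    have hmid : (m, j) ∈ s := hs.out hi hi' ⟨⟨by simp only; omega, le_rfl⟩, ⟨by simp, le_rfl⟩⟩
    exact (ih hmid).trans (hcol _ hmid hi')

variable (s : Finset (ℕ × ℕ)) (g : ℕ × ℕ → ℕ) (k : ℕ)

def dominoTops : Finset (ℕ × ℕ) := {c ∈ s | below c ∈ s ∧ g c = k ∧ g (below c) = k + 1}

def freeCells : Finset (ℕ × ℕ) :=
  {c ∈ s | (g c = k ∨ g c = k + 1) ∧ c ∉ dominoTops s g k ∧ c ∉ (dominoTops s g k).image below}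

def freeRow (r : ℕ) : Finset (ℕ × ℕ) := {c ∈ freeCells s g k | c.1 = r}

def benderKnuth (c : ℕ × ℕ) : ℕ :=
  if c ∈ freeCells s g k then
    if #{d ∈ freeRow s g k c.1 | d ≤ c} ≤ #{d ∈ freeRow s g k c.1 | g d = k + 1} then k else k + 1
  else g c

variable {s g k}

theorem mem_dominoTops {c : ℕ × ℕ} :
    c ∈ dominoTops s g k ↔ c ∈ s ∧ below c ∈ s ∧ g c = k ∧ g (below c) = k + 1 :=
  mem_filter

theorem mem_freeCells {c : ℕ × ℕ} :
    c ∈ freeCells s g k ↔ c ∈ s ∧ (g c = k ∨ g c = k + 1) ∧ c ∉ dominoTops s g k ∧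
      c ∉ (dominoTops s g k).image below :=
  mem_filter

theorem mem_freeRow {r : ℕ} {c : ℕ × ℕ} : c ∈ freeRow s g k r ↔ c ∈ freeCells s g k ∧ c.1 = r :=
  mem_filter

theorem freeCells_subset : freeCells s g k ⊆ s := filter_subset _ _

theorem eq_or_eq_succ_of_mem_freeCells {c : ℕ × ℕ} (hc : c ∈ freeCells s g k) :
    g c = k ∨ g c = k + 1 :=
  (mem_freeCells.1 hc).2.1

theorem notMem_freeCells_of_mem_dominoTops {c : ℕ × ℕ} (hc : c ∈ dominoTops s g k) :
    c ∉ freeCells s g k :=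
  fun h => (mem_freeCells.1 h).2.2.1 hc

theorem below_notMem_freeCells_of_mem_dominoTops {c : ℕ × ℕ} (hc : c ∈ dominoTops s g k) :
    below c ∉ freeCells s g k :=
  fun h => (mem_freeCells.1 h).2.2.2 (mem_image_of_mem below hc)

theorem mem_dominoTops_of_notMem_freeCells {c : ℕ × ℕ} (hc : c ∈ s) (hfree : c ∉ freeCells s g k)
    (hk : g c = k) : c ∈ dominoTops s g k := by
  by_contra htop
  refine hfree (mem_freeCells.2 ⟨hc, Or.inl hk, htop, fun hbot => ?_⟩)
  obtain ⟨d, hd, rfl⟩ := mem_image.1 hbot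
  have := (mem_dominoTops.1 hd).2.2.2
  omega

theorem mem_image_below_of_notMem_freeCells {c : ℕ × ℕ} (hc : c ∈ s)
    (hfree : c ∉ freeCells s g k) (hk : g c = k + 1) : c ∈ (dominoTops s g k).image below := by
  by_contra hbot
  refine hfree (mem_freeCells.2 ⟨hc, Or.inr hk, fun htop => ?_, hbot⟩)
  have := (mem_dominoTops.1 htop).2.2.1
  omega

theorem benderKnuth_of_mem {c : ℕ × ℕ} (hc : c ∈ freeCells s g k) :
    benderKnuth s g k c = if #{d ∈ freeRow s g k c.1 | d ≤ c} ≤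
      #{d ∈ freeRow s g k c.1 | g d = k + 1} then k else k + 1 :=
  if_pos hc

theorem benderKnuth_of_notMem {c : ℕ × ℕ} (hc : c ∉ freeCells s g k) :
    benderKnuth s g k c = g c :=
  if_neg hc

theorem benderKnuth_eq_or_eq_succ {c : ℕ × ℕ} (hc : c ∈ freeCells s g k) :
    benderKnuth s g k c = k ∨ benderKnuth s g k c = k + 1 := by
  rw [benderKnuth_of_mem hc]
  split <;> simp

section Semistandard

variable (hs : (s : Set (ℕ × ℕ)).OrdConnected) (hg : IsSSYTOn g s)
include hs hg

-- A fixed `k + 1` left of a free cell would sit below a `k`, and order-convexity would then put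
-- a `k` above the free cell too; dually for a fixed `k` right of a free cell.
theorem le_of_notMem_freeCells_of_lt {i j j' : ℕ} (hj : (i, j) ∈ s)
    (hfree : (i, j) ∉ freeCells s g k) (hfree' : (i, j') ∈ freeCells s g k) (hjj' : j < j') :
    g (i, j) ≤ k := by
  have hj' := freeCells_subset hfree'
  have hrow : g (i, j) ≤ g (i, j') := hg.2.1 i j j' hjj'.le hj hj'
  by_contra hgt
  have hk' : g (i, j') = k + 1 := by have := eq_or_eq_succ_of_mem_freeCells hfree'; omega
  obtain ⟨⟨a, b⟩, htop, hab⟩ :=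
    mem_image.1 (mem_image_below_of_notMem_freeCells hj hfree (by omega))
  simp only [below, Prod.mk.injEq] at hab
  obtain ⟨rfl, rfl⟩ := hab
  obtain ⟨hab_mem, -, hk, -⟩ := mem_dominoTops.1 htop
  have hmid : (a, j') ∈ s := hs.out hab_mem hj' ⟨⟨le_rfl, hjj'.le⟩, ⟨by simp, le_rfl⟩⟩
  have htop' : (a, j') ∈ dominoTops s g k := by
    have h1 : g (a, b) ≤ g (a, j') := hg.2.1 a b j' hjj'.le hab_mem hmid
    have h2 : g (a, j') < g (a + 1, j') := hg.lt_below hmid hj'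
    exact mem_dominoTops.2 ⟨hmid, hj', by omega, hk'⟩
  exact below_notMem_freeCells_of_mem_dominoTops htop' hfree'

theorem succ_le_of_notMem_freeCells_of_lt {i j j' : ℕ} (hj : (i, j) ∈ s)
    (hfree : (i, j) ∉ freeCells s g k) (hfree' : (i, j') ∈ freeCells s g k) (hj'j : j' < j) :
    k + 1 ≤ g (i, j) := by
  have hj' := freeCells_subset hfree'
  have hrow : g (i, j') ≤ g (i, j) := hg.2.1 i j' j hj'j.le hj' hj
  by_contra hlt
  have hk' : g (i, j') = k := by have := eq_or_eq_succ_of_mem_freeCells hfree'; omega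
  obtain ⟨-, hbelow, -, hk1⟩ :=
    mem_dominoTops.1 (mem_dominoTops_of_notMem_freeCells hj hfree (by omega))
  have hmid : (i + 1, j') ∈ s := hs.out hj' hbelow ⟨⟨by simp, le_rfl⟩, ⟨le_rfl, hj'j.le⟩⟩
  have htop' : (i, j') ∈ dominoTops s g k := by
    have h1 : g (i, j') < g (i + 1, j') := hg.lt_below hj' hmid
    have h2 : g (i + 1, j') ≤ g (i + 1, j) := hg.2.1 (i + 1) j' j hj'j.le hmid hbelow
    exact mem_dominoTops.2 ⟨hj', hmid, hk', by simp only [below] at hk1 ⊢; omega⟩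
  exact notMem_freeCells_of_mem_dominoTops htop' hfree'

theorem benderKnuth_le_of_le {i j j' : ℕ} (hjj' : j ≤ j') (hj : (i, j) ∈ s) (hj' : (i, j') ∈ s) :
    benderKnuth s g k (i, j) ≤ benderKnuth s g k (i, j') := by
  rcases hjj'.eq_or_lt with rfl | hlt
  · rfl
  by_cases h : (i, j) ∈ freeCells s g k <;> by_cases h' : (i, j') ∈ freeCells s g k
  · have hrank : #{d ∈ freeRow s g k i | d ≤ (i, j)} ≤ #{d ∈ freeRow s g k i | d ≤ (i, j')} :=
      card_le_card fun d hd => by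
        rw [mem_filter] at hd ⊢
        exact ⟨hd.1, hd.2.trans ⟨le_rfl, hjj'⟩⟩
    rw [benderKnuth_of_mem h, benderKnuth_of_mem h']
    dsimp only
    split_ifs <;> omega
  · have := succ_le_of_notMem_freeCells_of_lt hs hg hj' h' h hlt
    rw [benderKnuth_of_notMem h']
    rcases benderKnuth_eq_or_eq_succ h with h1 | h1 <;> omega
  · have := le_of_notMem_freeCells_of_lt hs hg hj h h' hlt
    rw [benderKnuth_of_notMem h]
    rcases benderKnuth_eq_or_eq_succ h' with h1 | h1 <;> omega
  · rw [benderKnuth_of_notMem h, benderKnuth_of_notMem h']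
    exact hg.2.1 i j j' hjj' hj hj'

end Semistandard

theorem benderKnuth_lt_below (hg : IsSSYTOn g s) {c : ℕ × ℕ} (hc : c ∈ s) (hc' : below c ∈ s) :
    benderKnuth s g k c < benderKnuth s g k (below c) := by
  have hlt := hg.lt_below hc hc'
  have top_of (hk : g c = k) (hk1 : g (below c) = k + 1) : c ∈ dominoTops s g k :=
    mem_dominoTops.2 ⟨hc, hc', hk, hk1⟩
  by_cases h : c ∈ freeCells s g k <;> by_cases h' : below c ∈ freeCells s g k
  · have := eq_or_eq_succ_of_mem_freeCells h
    have := eq_or_eq_succ_of_mem_freeCells h'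
    exact absurd h (notMem_freeCells_of_mem_dominoTops (top_of (by omega) (by omega)))
  · have hne : g (below c) ≠ k + 1 := fun hk1 => by
      have := eq_or_eq_succ_of_mem_freeCells h
      exact notMem_freeCells_of_mem_dominoTops (top_of (by omega) hk1) h
    have := eq_or_eq_succ_of_mem_freeCells h
    rw [benderKnuth_of_notMem h']
    rcases benderKnuth_eq_or_eq_succ h with h1 | h1 <;> omega
  · have hne : g c ≠ k := fun hk => by
      have := eq_or_eq_succ_of_mem_freeCells h'
      exact below_notMem_freeCells_of_mem_dominoTops (top_of hk (by omega)) h'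
    have := eq_or_eq_succ_of_mem_freeCells h'
    rw [benderKnuth_of_notMem h]
    rcases benderKnuth_eq_or_eq_succ h' with h1 | h1 <;> omega
  · rwa [benderKnuth_of_notMem h, benderKnuth_of_notMem h']

theorem isSSYTOn_benderKnuth (hs : (s : Set (ℕ × ℕ)).OrdConnected) (hg : IsSSYTOn g s)
    (hk : 1 ≤ k) : IsSSYTOn (benderKnuth s g k) s := by
  refine isSSYTOn_of_lt_below hs (fun c hc => ?_)
    (fun i j j' hjj' hj hj' => benderKnuth_le_of_le hs hg hjj' hj hj')
    (fun c hc hc' => benderKnuth_lt_below hg hc hc')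
  by_cases h : c ∈ freeCells s g k
  · rcases benderKnuth_eq_or_eq_succ h with h1 | h1 <;> omega
  · rw [benderKnuth_of_notMem h]
    exact hg.1 c hc

theorem dominoTops_benderKnuth (hg : IsSSYTOn g s) :
    dominoTops s (benderKnuth s g k) k = dominoTops s g k := by
  ext c
  rw [mem_dominoTops, mem_dominoTops]
  constructor
  · rintro ⟨hc, hc', hk, hk1⟩
    have hlt := hg.lt_below hc hc'
    have hgc : g c = k := by
      by_cases h : c ∈ freeCells s g k
      · rcases eq_or_eq_succ_of_mem_freeCells h with h1 | h1
        · exact h1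
        have h' : below c ∉ freeCells s g k := fun h' => by
          have := eq_or_eq_succ_of_mem_freeCells h'
          omega
        rw [benderKnuth_of_notMem h'] at hk1
        omega
      · rwa [benderKnuth_of_notMem h] at hk
    have hgc' : g (below c) = k + 1 := by
      by_cases h' : below c ∈ freeCells s g k
      · have := eq_or_eq_succ_of_mem_freeCells h'
        omega
      · rwa [benderKnuth_of_notMem h'] at hk1
    exact ⟨hc, hc', hgc, hgc'⟩
  · rintro ⟨hc, hc', hk, hk1⟩
    have htop : c ∈ dominoTops s g k := mem_dominoTops.2 ⟨hc, hc', hk, hk1⟩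
    rw [benderKnuth_of_notMem (notMem_freeCells_of_mem_dominoTops htop),
      benderKnuth_of_notMem (below_notMem_freeCells_of_mem_dominoTops htop)]
    exact ⟨hc, hc', hk, hk1⟩

theorem freeCells_benderKnuth (hg : IsSSYTOn g s) :
    freeCells s (benderKnuth s g k) k = freeCells s g k := by
  ext c
  rw [mem_freeCells, dominoTops_benderKnuth hg]
  by_cases h : c ∈ freeCells s g k
  · obtain ⟨hc, -, htop, hbot⟩ := mem_freeCells.1 h
    exact iff_of_true ⟨hc, benderKnuth_eq_or_eq_succ h, htop, hbot⟩ h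
  · rw [benderKnuth_of_notMem h, ← mem_freeCells]

theorem freeRow_benderKnuth (hg : IsSSYTOn g s) (r : ℕ) :
    freeRow s (benderKnuth s g k) k r = freeRow s g k r := by
  rw [freeRow, freeRow, freeCells_benderKnuth hg]

theorem isChain_freeRow (r : ℕ) : IsChain (· ≤ ·) (freeRow s g k r : Set (ℕ × ℕ)) := by
  intro c hc d hd _
  have hrow : c.1 = d.1 := (mem_freeRow.1 hc).2.trans (mem_freeRow.1 hd).2.symm
  rcases le_total c.2 d.2 with h | h
  · exact Or.inl ⟨hrow.le, h⟩
  · exact Or.inr ⟨hrow.ge, h⟩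

theorem card_freeRow_benderKnuth_eq (r : ℕ) :
    #{c ∈ freeRow s g k r | benderKnuth s g k c = k} = #{c ∈ freeRow s g k r | g c = k + 1} := by
  refine Eq.trans ?_ ((isChain_freeRow r).card_filter_card_filter_le_le
    (card_filter_le (freeRow s g k r) (fun c => g c = k + 1)))
  refine congrArg card (filter_congr fun c hc => ?_)
  obtain ⟨hfree, rfl⟩ := mem_freeRow.1 hc
  rw [benderKnuth_of_mem hfree]
  split_ifs with h <;> simp [h]

theorem card_freeRow_benderKnuth_eq_succ (r : ℕ) :
    #{c ∈ freeRow s g k r | benderKnuth s g k c = k + 1} = #{c ∈ freeRow s g k r | g c = k} := by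
  have hsum_bk := card_filter_eq_succ_add_card_filter_eq (t := freeRow s g k r)
    fun c hc => benderKnuth_eq_or_eq_succ (mem_freeRow.1 hc).1
  have hsum_g := card_filter_eq_succ_add_card_filter_eq (t := freeRow s g k r)
    fun c hc => eq_or_eq_succ_of_mem_freeCells (mem_freeRow.1 hc).1
  have := card_freeRow_benderKnuth_eq (s := s) (g := g) (k := k) r
  omega

/-- Within a row, the free entries equal to `k` come first. -/
theorem eq_iff_card_le (hg : IsSSYTOn g s) {c : ℕ × ℕ} (hc : c ∈ freeCells s g k) :
    g c = k ↔ #{d ∈ freeRow s g k c.1 | d ≤ c} ≤ #{d ∈ freeRow s g k c.1 | g d = k} := by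
  have hcs := freeCells_subset hc
  constructor
  · intro hk
    refine card_le_card fun d hd => ?_
    rw [mem_filter] at hd ⊢
    obtain ⟨hdfree, hrow⟩ := mem_freeRow.1 hd.1
    have := hg.le_of_fst_eq (freeCells_subset hdfree) hcs hrow hd.2.2
    have := eq_or_eq_succ_of_mem_freeCells hdfree
    exact ⟨hd.1, by omega⟩
  · intro hle
    by_contra hne
    have hk1 : g c = k + 1 := by have := eq_or_eq_succ_of_mem_freeCells hc; omega
    refine hle.not_gt (card_lt_card ⟨fun d hd => ?_, fun hsub => ?_⟩)
    · rw [mem_filter] at hd ⊢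
      obtain ⟨hdfree, hrow⟩ := mem_freeRow.1 hd.1
      refine ⟨hd.1, hrow.le, ?_⟩
      by_contra hlt
      have := hg.le_of_fst_eq hcs (freeCells_subset hdfree) hrow.symm (by omega)
      omega
    · have := (mem_filter.1 (hsub (mem_filter.2 ⟨mem_freeRow.2 ⟨hc, rfl⟩, le_rfl⟩))).2
      omega

theorem benderKnuth_benderKnuth (hg : IsSSYTOn g s) :
    benderKnuth s (benderKnuth s g k) k = g := by
  funext c
  by_cases hc : c ∈ freeCells s g k
  · rw [benderKnuth_of_mem (by rwa [freeCells_benderKnuth hg]), freeRow_benderKnuth hg,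
      card_freeRow_benderKnuth_eq_succ]
    rcases eq_or_eq_succ_of_mem_freeCells hc with h | h
    · rw [if_pos ((eq_iff_card_le hg hc).1 h), h]
    · rw [if_neg fun h' => by have := (eq_iff_card_le hg hc).2 h'; omega, h]
  · rw [benderKnuth_of_notMem (by rwa [freeCells_benderKnuth hg]), benderKnuth_of_notMem hc]

-- Free cells are counted row by row; fixed `k`s and fixed `k + 1`s are matched by `below`.
theorem card_benderKnuth_eq :
    #{c ∈ s | benderKnuth s g k c = k} = #{c ∈ s | g c = k + 1} := by
  have split_k : {c ∈ s | benderKnuth s g k c = k} =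
      {c ∈ freeCells s g k | benderKnuth s g k c = k} ∪ dominoTops s g k := by
    ext c
    simp only [mem_union, mem_filter]
    by_cases h : c ∈ freeCells s g k
    · simp [h, freeCells_subset h, (mem_freeCells.1 h).2.2.1]
    · rw [benderKnuth_of_notMem h]
      refine ⟨fun ⟨hc, hk⟩ => Or.inr (mem_dominoTops_of_notMem_freeCells hc h hk), ?_⟩
      rintro (⟨h', -⟩ | htop)
      · exact absurd h' h
      · exact ⟨(mem_dominoTops.1 htop).1, (mem_dominoTops.1 htop).2.2.1⟩
  have split_succ : {c ∈ s | g c = k + 1} =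
      {c ∈ freeCells s g k | g c = k + 1} ∪ (dominoTops s g k).image below := by
    ext c
    simp only [mem_union, mem_filter]
    refine ⟨fun ⟨hc, hk⟩ => ?_, ?_⟩
    · by_cases h : c ∈ freeCells s g k
      · exact Or.inl ⟨h, hk⟩
      · exact Or.inr (mem_image_below_of_notMem_freeCells hc h hk)
    · rintro (⟨h, hk⟩ | hbot)
      · exact ⟨freeCells_subset h, hk⟩
      · obtain ⟨d, hd, rfl⟩ := mem_image.1 hbot
        exact ⟨(mem_dominoTops.1 hd).2.1, (mem_dominoTops.1 hd).2.2.2⟩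
  rw [split_k, split_succ,
    card_union_of_disjoint (disjoint_left.2 fun c hc =>
      (mem_freeCells.1 (mem_filter.1 hc).1).2.2.1),
    card_union_of_disjoint (disjoint_left.2 fun c hc =>
      (mem_freeCells.1 (mem_filter.1 hc).1).2.2.2),
    card_image_of_injective _ below_injective,
    card_filter_eq_of_fiberwise Prod.fst card_freeRow_benderKnuth_eq]

theorem card_benderKnuth_eq_swap (hg : IsSSYTOn g s) (m : ℕ) :
    #{c ∈ s | benderKnuth s g k c = m} = #{c ∈ s | g c = swap k (k + 1) m} := by
  rcases eq_or_ne m k with rfl | hk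
  · rw [swap_apply_left, card_benderKnuth_eq]
  rcases eq_or_ne m (k + 1) with rfl | hk1
  · have := card_benderKnuth_eq (s := s) (g := benderKnuth s g k) (k := k)
    rw [benderKnuth_benderKnuth hg] at this
    rw [swap_apply_right, this]
  rw [swap_apply_of_ne_of_ne hk hk1]
  refine congrArg card (filter_congr fun c _ => ?_)
  by_cases h : c ∈ freeCells s g k
  · have := eq_or_eq_succ_of_mem_freeCells h
    have := benderKnuth_eq_or_eq_succ h
    omega
  · rw [benderKnuth_of_notMem h]

theorem prod_X_benderKnuth {R : Type*} [CommSemiring R] (hg : IsSSYTOn g s) :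
    ∏ c ∈ s, (X (benderKnuth s g k c) : MvPolynomial ℕ R) =
      rename (swap k (k + 1)) (∏ c ∈ s, X (g c)) := by
  simp only [map_prod, rename_X]
  refine prod_comp_eq_of_card_fiber_eq X fun m => ?_
  rw [card_benderKnuth_eq_swap hg]
  simp only [swap_apply_eq_iff]

theorem benderKnuth_mem_boundedSSYT {n : ℕ} (hs : (s : Set (ℕ × ℕ)).OrdConnected) (hk : 1 ≤ k)
    (hkn : k + 1 ≤ n) (hg : g ∈ boundedSSYT s n) : benderKnuth s g k ∈ boundedSSYT s n := by
  obtain ⟨⟨hssyt, hzero⟩, hle⟩ := hg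
  refine ⟨⟨isSSYTOn_benderKnuth hs hssyt hk, fun c hc => ?_⟩, fun c hc => ?_⟩
  · rw [benderKnuth_of_notMem fun h => hc (freeCells_subset h)]
    exact hzero c hc
  · by_cases h : c ∈ freeCells s g k
    · rcases benderKnuth_eq_or_eq_succ h with h1 | h1 <;> omega
    · rw [benderKnuth_of_notMem h]
      exact hle c hc

end BenderKnuth

open BenderKnuth in
theorem rename_swap_schurPoly (R : Type*) [CommSemiring R] {s : Finset (ℕ × ℕ)}
    (hs : (s : Set (ℕ × ℕ)).OrdConnected) {n k : ℕ} (hk : 1 ≤ k) (hkn : k + 1 ≤ n) :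
    rename (swap k (k + 1)) (schurPoly R s n) = schurPoly R s n := by
  rw [schurPoly, map_sum]
  have mem (g) (hg : g ∈ (finite_boundedSSYT s n).toFinset) :
      benderKnuth s g k ∈ (finite_boundedSSYT s n).toFinset := by
    rw [Set.Finite.mem_toFinset] at hg ⊢
    exact benderKnuth_mem_boundedSSYT hs hk hkn hg
  have involutive (g) (hg : g ∈ (finite_boundedSSYT s n).toFinset) :
      benderKnuth s (benderKnuth s g k) k = g :=
    benderKnuth_benderKnuth ((Set.Finite.mem_toFinset _).1 hg).1.1
  exact sum_nbij' (benderKnuth s · k) (benderKnuth s · k) mem mem involutive involutive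
    fun g hg => (prod_X_benderKnuth ((Set.Finite.mem_toFinset _).1 hg).1.1).symm

theorem skew_schur_symmetric_general (μ lam : YoungDiagram) (n : ℕ) :
    ∃ hfin : {g : ℕ × ℕ → ℕ |
        (IsSSYTOn g (skewCells μ lam) ∧ ∀ c ∉ skewCells μ lam, g c = 0) ∧
        ∀ c ∈ skewCells μ lam, g c ≤ n}.Finite,
      ∀ σ : Equiv.Perm ℕ, (∀ m, m ∉ Finset.Icc 1 n → σ m = m) →
        MvPolynomial.rename (⇑σ)
            (∑ g ∈ hfin.toFinset, ∏ c ∈ skewCells μ lam,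
              (MvPolynomial.X (g c) : MvPolynomial ℕ ℤ)) =
          ∑ g ∈ hfin.toFinset, ∏ c ∈ skewCells μ lam, MvPolynomial.X (g c) := by
  refine ⟨finite_boundedSSYT (skewCells μ lam) n, fun σ hσ => ?_⟩
  refine rename_eq_of_mem_closure ?_ (mem_closure_swap_succ hσ)
  rintro _ ⟨k, hk, hkn, rfl⟩
  exact rename_swap_schurPoly ℤ (ordConnected_skewCells μ lam) hk hkn

/-- The skew Schur polynomial `s_{λ/μ}(x₁, …, xₙ) = ∑_{T ∈ SSYT(λ/μ, n)} x^T` is a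
symmetric polynomial in `x₁, …, xₙ`: it is invariant under every permutation of the
variables `x₁, …, xₙ` (i.e. under renaming by any permutation of `ℕ` fixing all indices
outside `{1, …, n}`); moreover the set `SSYT(λ/μ, n)` is finite, so the sum makes sense. -/
theorem skew_schur_symmetric (μ lam : YoungDiagram) (hsub : μ ≤ lam) (n : ℕ) (hn : 1 ≤ n) :
    ∃ hfin : {g : ℕ × ℕ → ℕ |
        (IsSSYTOn g (skewCells μ lam) ∧ ∀ c ∉ skewCells μ lam, g c = 0) ∧
        ∀ c ∈ skewCells μ lam, g c ≤ n}.Finite,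
      ∀ σ : Equiv.Perm ℕ, (∀ m, m ∉ Finset.Icc 1 n → σ m = m) →
        MvPolynomial.rename (⇑σ)
            (∑ g ∈ hfin.toFinset, ∏ c ∈ skewCells μ lam,
              (MvPolynomial.X (g c) : MvPolynomial ℕ ℤ)) =
          ∑ g ∈ hfin.toFinset, ∏ c ∈ skewCells μ lam, MvPolynomial.X (g c) :=
  skew_schur_symmetric_general μ lam n
end
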